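/- arXiv:2604.01269 — 5 statements merged into one kernel-verified Lean document; each statement's English description precedes it below -/
import Mathlib

section
/- If an LTS is thread-consistent with respect to a mapping thr : Act → T and an equivalence relation ≡ on Act, then the relation ⌣_T = {(a,b) | thr(a) ≠ thr(b)} is a concurrency relation for that LTS, provided that a ≡ c implies thr(a) = thr(c) for all actions a, c. -/
/-! Thread consistency is the one-step instance of the concurrency condition for `⌣_T`. Since `≡`
preserves thread ids, the equivalent action obtained after each step still lies in a thread
different from every later action on the path, so the condition extends to paths by induction. -/

section
variable {S A : Type*}

/-- An action `a` is enabled in state `s` of an LTS with transition relation `Tr`. -/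
def EnabledIn (Tr : S → A → S → Prop) (a : A) (s : S) : Prop := ∃ s', Tr s a s'

/-- A (finite) path from a state to a state, recorded by its list of actions. -/
inductive PathFrom (Tr : S → A → S → Prop) : S → List A → S → Prop
  | nil (s : S) : PathFrom Tr s [] s
  | cons {s s' s'' : S} {a : A} {l : List A} :
      Tr s a s' → PathFrom Tr s' l s'' → PathFrom Tr s (a :: l) s''

/-- `conc` is a concurrency relation w.r.t. the equivalence `equiv` on actions. -/
def IsConcRel (Tr : S → A → S → Prop) (equiv : A → A → Prop) (conc : A → A → Prop) : Prop :=
  (∀ a b : A, equiv a b → ¬ conc a b) ∧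
  (∀ (a : A) (s s' : S) (l : List A), PathFrom Tr s l s' → EnabledIn Tr a s →
    (∀ b ∈ l, conc a b) → ∃ c : A, equiv a c ∧ EnabledIn Tr c s')

/-- Thread-consistency of an LTS w.r.t. a thread-id mapping `thr` and equivalence `equiv`:
whenever `a` is enabled in `s` and `s →ᵇ s'` with `thr a ≠ thr b`, some action equivalent
to `a` is enabled in `s'`. -/
def ThreadConsistent {T : Type*} (Tr : S → A → S → Prop) (thr : A → T)
    (equiv : A → A → Prop) : Prop :=
  ∀ (s s' : S) (a b : A), EnabledIn Tr a s → Tr s b s' → thr a ≠ thr b →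
    ∃ c : A, equiv a c ∧ EnabledIn Tr c s'

theorem PathFrom.exists_equiv_enabled {Tr : S → A → S → Prop} {equiv conc : A → A → Prop}
    (hrefl : ∀ a, equiv a a) (htrans : ∀ {a b c}, equiv a b → equiv b c → equiv a c)
    (hconc : ∀ a c b, equiv a c → conc a b → conc c b)
    (hstep : ∀ (s s' : S) (a b : A), EnabledIn Tr a s → Tr s b s' → conc a b →
      ∃ c, equiv a c ∧ EnabledIn Tr c s')
    {s s' : S} {l : List A} (hpath : PathFrom Tr s l s') {a : A} (ha : EnabledIn Tr a s)
    (hl : ∀ b ∈ l, conc a b) :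
    ∃ c, equiv a c ∧ EnabledIn Tr c s' := by
  induction hpath generalizing a with
  | nil _ => exact ⟨a, hrefl a, ha⟩
  | @cons s s₁ s₂ b l htr _ ih =>
    obtain ⟨c, hac, hc⟩ := hstep s s₁ a b ha htr (hl b List.mem_cons_self)
    obtain ⟨d, hcd, hd⟩ :=
      ih hc fun b' hb' => hconc a c b' hac (hl b' (List.mem_cons_of_mem b hb'))
    exact ⟨d, htrans hac hcd, hd⟩

/-- In a thread-consistent LTS (with `equiv` respecting thread ids), the thread
interference relation `⌣_T = {(a,b) | thr a ≠ thr b}` is a concurrency relation. -/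
theorem threadInterference_is_concurrency_relation
    {T : Type*} (Tr : S → A → S → Prop) (thr : A → T) (equiv : A → A → Prop)
    (hequiv : Equivalence equiv)
    (hthr : ∀ a c : A, equiv a c → thr a = thr c)
    (hTC : ThreadConsistent Tr thr equiv) :
    IsConcRel Tr equiv (fun a b => thr a ≠ thr b) :=
  ⟨fun a b hab hne => hne (hthr a b hab),
    fun _ _ _ _ hpath ha hl =>
      hpath.exists_equiv_enabled hequiv.refl hequiv.trans
        (fun a c _ hac hne => hthr a c hac ▸ hne) hTC ha hl⟩

end
end

section
/- In any reachable state s of the full-read safe register model, if a thread t is among the active readers of s and the set of active writers of s is non-empty, then the overlap flag ovrl(s, t) holds. -/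
section
variable {T D : Type}

/-- The state of a full-read safe MWMR register: its stored value, the sets of active
readers and writers, the per-thread overlap flag, and the per-thread recorded value. -/
structure SafeState (T D : Type) where
  stor : D
  rds : Set T
  wrts : Set T
  ovrl : T → Prop
  recv : T → D

/-- The interface actions of a full-read safe register (for a fixed register). -/
inductive SafeAct (T D : Type) : Type
  | startRead (t : T)
  | finishRead (t : T) (d : D)
  | startWrite (t : T) (d : D)
  | finishWrite (t : T)

variable [DecidableEq T]

/-- The transition relation of the full-read safe register model. -/
inductive SafeTrans : SafeState T D → SafeAct T D → SafeState T D → Prop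
  | startRead (s : SafeState T D) (t : T) (h : t ∉ s.rds ∧ t ∉ s.wrts) :
      SafeTrans s (.startRead t)
        { s with rds := insert t s.rds,
                 ovrl := fun t' => if t' = t then s.wrts.Nonempty else s.ovrl t' }
  | finishReadExact (s : SafeState T D) (t : T) (h1 : t ∈ s.rds) (h2 : ¬ s.ovrl t) :
      SafeTrans s (.finishRead t s.stor) { s with rds := s.rds \ {t} }
  | finishReadAny (s : SafeState T D) (t : T) (d : D) (h1 : t ∈ s.rds) (h2 : s.ovrl t) :
      SafeTrans s (.finishRead t d) { s with rds := s.rds \ {t} }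
  | startWrite (s : SafeState T D) (t : T) (d : D) (h : t ∉ s.rds ∧ t ∉ s.wrts) :
      SafeTrans s (.startWrite t d)
        { s with wrts := insert t s.wrts,
                 recv := Function.update s.recv t d,
                 ovrl := fun t' => if t' = t then s.wrts.Nonempty else True }
  | finishWriteExact (s : SafeState T D) (t : T) (h1 : t ∈ s.wrts) (h2 : ¬ s.ovrl t) :
      SafeTrans s (.finishWrite t) { s with wrts := s.wrts \ {t}, stor := s.recv t }
  | finishWriteAny (s : SafeState T D) (t : T) (d : D) (h1 : t ∈ s.wrts) (h2 : s.ovrl t) :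
      SafeTrans s (.finishWrite t) { s with wrts := s.wrts \ {t}, stor := d }

/-- The initial state of the register, with initial value `d0`. -/
def SafeInit (d0 : D) : SafeState T D :=
  { stor := d0, rds := ∅, wrts := ∅, ovrl := fun _ => False, recv := fun _ => d0 }

/-- Reachability from a state via the transition relation. -/
inductive Reach {St Ac : Type*} (Tr : St → Ac → St → Prop) (s0 : St) : St → Prop
  | refl : Reach Tr s0 s0
  | step {s : St} {a : Ac} {s' : St} : Reach Tr s0 s → Tr s a s' → Reach Tr s0 s'

/-- In any reachable state of the full-read safe register model, if thread `t` is an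
active reader and some write is active, then the overlap flag of `t` holds. -/
theorem safe_register_overlap (d0 : D) (s : SafeState T D)
    (hreach : Reach SafeTrans (SafeInit d0) s) (t : T)
    (ht : t ∈ s.rds) (hw : s.wrts.Nonempty) : s.ovrl t := by
  suffices h : ∀ t ∈ s.rds, s.wrts.Nonempty → s.ovrl t from h t ht hw
  clear ht hw t
  induction hreach with
  | refl => intro t ht _; exact absurd ht (Set.notMem_empty t)
  | step _ htr ih =>
    cases htr with
    | startRead t0 h =>
      intro t ht hw
      simp only [Set.mem_insert_iff] at ht
      by_cases h' : t = t0
      · simp [h', hw]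
      · simp only [h', if_false]
        exact ih t (ht.resolve_left h') hw
    | finishReadExact t0 h1 h2 =>
      intro t ht hw; exact ih t ht.1 hw
    | finishReadAny t0 d h1 h2 =>
      intro t ht hw; exact ih t ht.1 hw
    | startWrite t0 d h =>
      intro t ht hw
      have : t ≠ t0 := fun he => h.1 (he ▸ ht)
      simp [this]
    | finishWriteExact t0 h1 h2 =>
      intro t ht hw
      exact ih t ht ⟨t0, h1⟩
    | finishWriteAny t0 d h1 h2 =>
      intro t ht hw
      exact ih t ht ⟨t0, h1⟩

end
end

section
/- In the full-read atomic register LTS, independent actions of distinct threads commute up to access-function equivalence: if s₀ →^a s₁ →^b s₂ with thr(a) ≠ thr(b), and it is not the case that {a,b} consists of two order actions at least one of which is an order-write (i.e., excluding the cases a=order_read∧b=order_write, a=order_write∧b=order_read, a=order_write∧b=order_write on the same register), then there exist states s₃, s₄ with s₀ →^b s₃ →^a s₄ and s₂ ≅ s₄, where ≅ means the states agree on the access functions stor, rds, wrts, pend, and rec(·,t) for every thread t. -/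
section
variable {T D : Type}

/-- The state of a full-read atomic MWMR register: stored value, active readers,
active writers, pending (not-yet-ordered) operations, and recorded values. -/
structure AState (T D : Type) where
  stor : D
  rds : Set T
  wrts : Set T
  pend : Set T
  recv : T → D

/-- The actions of a full-read atomic register (for a fixed register). -/
inductive AAct (T D : Type) : Type
  | startRead (t : T)
  | orderRead (t : T)
  | finishRead (t : T) (d : D)
  | startWrite (t : T) (d : D)
  | orderWrite (t : T)
  | finishWrite (t : T)

/-- The thread performing an action. -/
def AAct.thr : AAct T D → T
  | .startRead t => t
  | .orderRead t => t
  | .finishRead t _ => t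
  | .startWrite t _ => t
  | .orderWrite t => t
  | .finishWrite t => t

def AAct.isOrderRead : AAct T D → Prop
  | .orderRead _ => True
  | _ => False

def AAct.isOrderWrite : AAct T D → Prop
  | .orderWrite _ => True
  | _ => False

variable [DecidableEq T]

/-- The transition relation of the full-read atomic register model. -/
inductive ATrans : AState T D → AAct T D → AState T D → Prop
  | startRead (s : AState T D) (t : T) (h : t ∉ s.rds ∧ t ∉ s.wrts) :
      ATrans s (.startRead t) { s with rds := insert t s.rds, pend := insert t s.pend }
  | orderRead (s : AState T D) (t : T) (h1 : t ∈ s.rds) (h2 : t ∈ s.pend) :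
      ATrans s (.orderRead t)
        { s with pend := s.pend \ {t}, recv := Function.update s.recv t s.stor }
  | finishRead (s : AState T D) (t : T) (h1 : t ∈ s.rds) (h2 : t ∉ s.pend) :
      ATrans s (.finishRead t (s.recv t)) { s with rds := s.rds \ {t} }
  | startWrite (s : AState T D) (t : T) (d : D) (h : t ∉ s.rds ∧ t ∉ s.wrts) :
      ATrans s (.startWrite t d)
        { s with wrts := insert t s.wrts, pend := insert t s.pend,
                 recv := Function.update s.recv t d }
  | orderWrite (s : AState T D) (t : T) (h1 : t ∈ s.wrts) (h2 : t ∈ s.pend) :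
      ATrans s (.orderWrite t) { s with pend := s.pend \ {t}, stor := s.recv t }
  | finishWrite (s : AState T D) (t : T) (h1 : t ∈ s.wrts) (h2 : t ∉ s.pend) :
      ATrans s (.finishWrite t) { s with wrts := s.wrts \ {t} }

/-- Two register states agree on all access functions (`stor`, `rds`, `wrts`, `pend`,
and `rec(·,t)` for every thread `t`). -/
def ACong (s s' : AState T D) : Prop :=
  s.stor = s'.stor ∧ s.rds = s'.rds ∧ s.wrts = s'.wrts ∧ s.pend = s'.pend ∧
  ∀ t : T, s.recv t = s'.recv t

/-- Guard of an action. -/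
def AGuard (s : AState T D) : AAct T D → Prop
  | .startRead t => t ∉ s.rds ∧ t ∉ s.wrts
  | .orderRead t => t ∈ s.rds ∧ t ∈ s.pend
  | .finishRead t d => t ∈ s.rds ∧ t ∉ s.pend ∧ d = s.recv t
  | .startWrite t _ => t ∉ s.rds ∧ t ∉ s.wrts
  | .orderWrite t => t ∈ s.wrts ∧ t ∈ s.pend
  | .finishWrite t => t ∈ s.wrts ∧ t ∉ s.pend

/-- Effect of an action. -/
def AApp (s : AState T D) : AAct T D → AState T D
  | .startRead t => { s with rds := insert t s.rds, pend := insert t s.pend }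
  | .orderRead t => { s with pend := s.pend \ {t}, recv := Function.update s.recv t s.stor }
  | .finishRead t _ => { s with rds := s.rds \ {t} }
  | .startWrite t d => { s with wrts := insert t s.wrts, pend := insert t s.pend,
                                recv := Function.update s.recv t d }
  | .orderWrite t => { s with pend := s.pend \ {t}, stor := s.recv t }
  | .finishWrite t => { s with wrts := s.wrts \ {t} }

lemma atrans_iff {s s' : AState T D} {a : AAct T D} :
    ATrans s a s' ↔ AGuard s a ∧ s' = AApp s a := by
  constructor
  · rintro h
    cases h <;> simp_all [AGuard, AApp]
  · rintro ⟨hg, rfl⟩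
    cases a with
    | startRead t => exact ATrans.startRead s t hg
    | orderRead t => exact ATrans.orderRead s t hg.1 hg.2
    | finishRead t d =>
        obtain ⟨h1, h2, rfl⟩ := hg
        exact ATrans.finishRead s t h1 h2
    | startWrite t d => exact ATrans.startWrite s t d hg
    | orderWrite t => exact ATrans.orderWrite s t hg.1 hg.2
    | finishWrite t => exact ATrans.finishWrite s t hg.1 hg.2

/-- Independent actions of distinct threads commute in the full-read atomic register LTS,
up to access-function equivalence, provided they are not two order actions at least one
of which is an order-write. -/
theorem atomic_register_commutation
    (s0 s1 s2 : AState T D) (a b : AAct T D)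
    (h1 : ATrans s0 a s1) (h2 : ATrans s1 b s2)
    (hthr : a.thr ≠ b.thr)
    (hx1 : ¬ (a.isOrderRead ∧ b.isOrderWrite))
    (hx2 : ¬ (a.isOrderWrite ∧ b.isOrderRead))
    (hx3 : ¬ (a.isOrderWrite ∧ b.isOrderWrite)) :
    ∃ s3 s4 : AState T D, ATrans s0 b s3 ∧ ATrans s3 a s4 ∧ ACong s2 s4 := by
  rw [atrans_iff] at h1 h2
  obtain ⟨g1, rfl⟩ := h1
  obtain ⟨g2, rfl⟩ := h2
  refine ⟨AApp s0 b, AApp (AApp s0 b) a, atrans_iff.mpr ⟨?_, rfl⟩,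
    atrans_iff.mpr ⟨?_, rfl⟩, ?_⟩ <;>
  · cases a <;> cases b <;>
      simp_all [AAct.thr, AAct.isOrderRead, AAct.isOrderWrite, AGuard, AApp, ACong,
        Function.update, Set.insert_comm, Set.insert_diff_singleton_comm, Ne.symm hthr,
        Set.ext_iff] <;>
      aesop

end
end

section
/- If π is a C-complete (i.e. B-⌣_C-just) path in the restricted model M_C (which forbids overlapping operations according to memory model C) starting in its initial state, then π is also a C-complete path in the unrestricted full-read atomic model M_FR starting in its initial state, for each C ∈ {A, I, S}. -/
/-!
Every step of `M_C` is a step of `M_FR`: the guards of `M_C` are stronger, except that under `S`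
a start-write only asks for no writer to be active. That gap is closed by an invariant of reachable
states: a thread is idle, or inside exactly one operation and then able to do nothing but finish
it, so a thread that starts a write is never in the middle of a read.

For justness, let `a` be enabled in `M_FR` at position `k` with every later action
`⌣_C`-concurrent to `a`. Then the thread of `a` never moves again. If `a` is not a start action,
it is also enabled in `M_C`. If `a` starts an operation on a register `r`, concurrency rules out
every later start on `r` that the `M_C`-guard of `a` waits out. Each thread active on `r` has an
order or finish action of its own enabled, so by `C`-justness it keeps moving until it leaves
`r`; finitely many threads are active, so `r` is eventually free and `a` becomes enabled in
`M_C`, and justness of `π` in `M_C` produces a later action not concurrent with `a`.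
-/

section Basic

variable {S A : Type*}

/-- A finite-or-infinite path: states, actions, and a length in `ℕ∞`. -/
structure RawPath (S A : Type*) where
  states : ℕ → S
  acts : ℕ → A
  len : ℕ∞

/-- `π` is a path of the LTS `Tr` starting in `s0`. -/
def IsPathOf (Tr : S → A → S → Prop) (s0 : S) (π : RawPath S A) : Prop :=
  π.states 0 = s0 ∧ ∀ i : ℕ, (i : ℕ∞) < π.len → Tr (π.states i) (π.acts i) (π.states (i + 1))

/-- `B`-`conc`-justness: for each suffix of `π`, if a non-blockable action `a` is enabled
in its initial state, then an action interfering with `a` occurs in the suffix. -/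
def JustPath (Tr : S → A → S → Prop) (conc : A → A → Prop) (B : Set A)
    (π : RawPath S A) : Prop :=
  ∀ (k : ℕ) (a : A), (k : ℕ∞) ≤ π.len → a ∉ B → EnabledIn Tr a (π.states k) →
    ∃ j : ℕ, k ≤ j ∧ (j : ℕ∞) < π.len ∧ ¬ conc a (π.acts j)

/-- The number of occurrences of action `a` on the path `π`, in `ℕ∞`. -/
noncomputable def occCount (π : RawPath S A) (a : A) : ℕ∞ :=
  Set.encard {j : ℕ | (j : ℕ∞) < π.len ∧ π.acts j = a}

/-- `w` is the weak trace `ℓ⁻(π)`: the subsequence of `vis`-actions of `π`, in order. -/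
def IsEllMinus (vis : A → Prop) (π : RawPath S A) (w : ℕ → Option A) : Prop :=
  ∃ (m : ℕ∞) (f : ℕ → ℕ),
    (∀ i j : ℕ, (i : ℕ∞) < m → (j : ℕ∞) < m → i < j → f i < f j) ∧
    (∀ i : ℕ, (i : ℕ∞) < m →
      ((f i : ℕ∞) < π.len ∧ vis (π.acts (f i)) ∧ w i = some (π.acts (f i)))) ∧
    (∀ i : ℕ, ¬ (i : ℕ∞) < m → w i = none) ∧
    (∀ j : ℕ, (j : ℕ∞) < π.len → vis (π.acts j) → ∃ i : ℕ, (i : ℕ∞) < m ∧ f i = j)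

/-- The set of weak `C`-complete traces of an LTS. -/
def WCT (Tr : S → A → S → Prop) (s0 : S) (Cjust : RawPath S A → Prop) (vis : A → Prop) :
    Set (ℕ → Option A) :=
  {w | ∃ π : RawPath S A, IsPathOf Tr s0 π ∧ Cjust π ∧ IsEllMinus vis π w}

end Basic

/-- The actions of thread-register models: register interface actions, register-local
order actions, instant reads, and the thread-local actions (crit, noncrit, other). -/
inductive RWAct (T R : Type) (D : R → Type) : Type
  | startRead  (t : T) (r : R)
  | orderRead  (t : T) (r : R)
  | finishRead (t : T) (r : R) (d : D r)
  | startWrite (t : T) (r : R) (d : D r)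
  | orderWrite (t : T) (r : R)
  | finishWrite (t : T) (r : R)
  | read (t : T) (r : R) (d : D r)
  | crit (t : T)
  | noncrit (t : T)
  | tloc (t : T) (n : ℕ)

namespace RWAct

variable {T R : Type} {D : R → Type}

/-- The thread id of an action. -/
def thr : RWAct T R D → T
  | startRead t _ => t
  | orderRead t _ => t
  | finishRead t _ _ => t
  | startWrite t _ _ => t
  | orderWrite t _ => t
  | finishWrite t _ => t
  | read t _ _ => t
  | crit t => t
  | noncrit t => t
  | tloc t _ => t

/-- The register id of an action (`none` for thread-local actions). -/
def regOf : RWAct T R D → Option R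
  | startRead _ r => some r
  | orderRead _ r => some r
  | finishRead _ r _ => some r
  | startWrite _ r _ => some r
  | orderWrite _ r => some r
  | finishWrite _ r => some r
  | read _ r _ => some r
  | crit _ => none
  | noncrit _ => none
  | tloc _ _ => none

/-- Actions belonging to the alphabet of a thread (all but the register-local order actions). -/
def isThreadAct : RWAct T R D → Prop
  | orderRead _ _ => False
  | orderWrite _ _ => False
  | _ => True

/-- `read?`: `a` is the start of a read operation on register `r`. -/
def isReadStart (r : R) : RWAct T R D → Prop
  | startRead _ r' => r' = r
  | read _ r' _ => r' = r
  | _ => False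

/-- `write?`: `a` is the start of a write operation on register `r`. -/
def isWriteStart (r : R) : RWAct T R D → Prop
  | startWrite _ r' _ => r' = r
  | _ => False

/-- `a ∈ start(r)`. -/
def inStart (r : R) (a : RWAct T R D) : Prop := isReadStart r a ∨ isWriteStart r a

/-- The visible actions: `crit` and `noncrit`. -/
def IsVis : RWAct T R D → Prop
  | crit _ => True
  | noncrit _ => True
  | _ => False

/-- `a` is an (instant) read action. -/
def isReadAct : RWAct T R D → Prop
  | read _ _ _ => True
  | _ => False

end RWAct

/-- The local state of a register. -/
structure RegState (T D : Type) where
  stor : D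
  rds : Set T
  wrts : Set T
  pend : Set T
  recv : T → D

/-- The four memory models: `FR` (arbitrary overlap), `A` (blocking reads and writes),
`I` (blocking model with concurrent reads), `S` (blocking writes, non-blocking reads). -/
inductive OverlapMode : Type
  | FR | A | I | S

/-- The guard for start-read actions in each memory model. -/
def gRead {T D : Type} : OverlapMode → RegState T D → T → Prop
  | OverlapMode.FR, s, t => t ∉ s.rds ∧ t ∉ s.wrts
  | OverlapMode.A, s, _ => s.rds = ∅ ∧ s.wrts = ∅
  | OverlapMode.I, s, t => t ∉ s.rds ∧ s.wrts = ∅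
  | OverlapMode.S, s, t => t ∉ s.rds ∧ s.wrts = ∅

/-- The guard for start-write actions in each memory model. -/
def gWrite {T D : Type} : OverlapMode → RegState T D → T → Prop
  | OverlapMode.FR, s, t => t ∉ s.rds ∧ t ∉ s.wrts
  | OverlapMode.A, s, _ => s.rds = ∅ ∧ s.wrts = ∅
  | OverlapMode.I, s, _ => s.rds = ∅ ∧ s.wrts = ∅
  | OverlapMode.S, s, _ => s.wrts = ∅

/-- A family of thread LTSs, one per thread id. -/
structure ThreadSys (T R : Type) (D : R → Type) where
  TS : T → Type
  init : ∀ t, TS t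
  tr : ∀ t, TS t → RWAct T R D → TS t → Prop

/-- A state of the thread-register model: a state per thread and per register. -/
structure MState {T R : Type} {D : R → Type} (Θ : ThreadSys T R D) where
  th : ∀ t, Θ.TS t
  rg : ∀ r, RegState T (D r)

section Comp

variable {T R : Type} {D : R → Type} [DecidableEq T]

/-- The thread interference relation `⌣_T`. -/
def concT (a b : RWAct T R D) : Prop := a.thr ≠ b.thr

/-- The signalling reads relation `⌣_S`. -/
def concS (a b : RWAct T R D) : Prop :=
  concT a b ∧ ¬ ∃ r, RWAct.inStart r a ∧ RWAct.isWriteStart r b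

/-- The interfering reads relation `⌣_I`. -/
def concI (a b : RWAct T R D) : Prop :=
  concS a b ∧ ¬ ∃ r, RWAct.isWriteStart r a ∧ RWAct.isReadStart r b

/-- The all interfering relation `⌣_A`. -/
def concA (a b : RWAct T R D) : Prop :=
  concI a b ∧ ¬ ∃ r, RWAct.isReadStart r a ∧ RWAct.isReadStart r b

/-- The concurrency relation matching each memory model. -/
def concOf : OverlapMode → RWAct T R D → RWAct T R D → Prop
  | OverlapMode.FR => concT
  | OverlapMode.A => concA
  | OverlapMode.I => concI
  | OverlapMode.S => concS

/-- The blockable actions: a thread may stay in its non-critical section forever. -/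
def Blk : Set (RWAct T R D) := {a | ∃ t : T, a = RWAct.noncrit t}

/-- The full-read atomic register LTS for register `r` (with start guards given by the
memory model `mode`; `FR` is the unrestricted model). -/
inductive AtoTrans (mode : OverlapMode) (r : R) :
    RegState T (D r) → RWAct T R D → RegState T (D r) → Prop
  | startRead (s : RegState T (D r)) (t : T) (h : gRead mode s t) :
      AtoTrans mode r s (RWAct.startRead t r)
        { s with rds := insert t s.rds, pend := insert t s.pend }
  | orderRead (s : RegState T (D r)) (t : T) (h1 : t ∈ s.rds) (h2 : t ∈ s.pend) :
      AtoTrans mode r s (RWAct.orderRead t r)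
        { s with pend := s.pend \ {t}, recv := Function.update s.recv t s.stor }
  | finishRead (s : RegState T (D r)) (t : T) (h1 : t ∈ s.rds) (h2 : t ∉ s.pend) :
      AtoTrans mode r s (RWAct.finishRead t r (s.recv t)) { s with rds := s.rds \ {t} }
  | startWrite (s : RegState T (D r)) (t : T) (d : D r) (h : gWrite mode s t) :
      AtoTrans mode r s (RWAct.startWrite t r d)
        { s with wrts := insert t s.wrts, pend := insert t s.pend,
                 recv := Function.update s.recv t d }
  | orderWrite (s : RegState T (D r)) (t : T) (h1 : t ∈ s.wrts) (h2 : t ∈ s.pend) :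
      AtoTrans mode r s (RWAct.orderWrite t r)
        { s with pend := s.pend \ {t}, stor := s.recv t }
  | finishWrite (s : RegState T (D r)) (t : T) (h1 : t ∈ s.wrts) (h2 : t ∉ s.pend) :
      AtoTrans mode r s (RWAct.finishWrite t r) { s with wrts := s.wrts \ {t} }

/-- The instant-read atomic register LTS for register `r`. -/
inductive IRAtoTrans (r : R) :
    RegState T (D r) → RWAct T R D → RegState T (D r) → Prop
  | read (s : RegState T (D r)) (t : T) (h : t ∉ s.wrts) :
      IRAtoTrans r s (RWAct.read t r s.stor) s
  | startWrite (s : RegState T (D r)) (t : T) (d : D r) (h : t ∉ s.wrts) :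
      IRAtoTrans r s (RWAct.startWrite t r d)
        { s with wrts := insert t s.wrts, pend := insert t s.pend,
                 recv := Function.update s.recv t d }
  | orderWrite (s : RegState T (D r)) (t : T) (h1 : t ∈ s.wrts) (h2 : t ∈ s.pend) :
      IRAtoTrans r s (RWAct.orderWrite t r)
        { s with pend := s.pend \ {t}, stor := s.recv t }
  | finishWrite (s : RegState T (D r)) (t : T) (h1 : t ∈ s.wrts) (h2 : t ∉ s.pend) :
      IRAtoTrans r s (RWAct.finishWrite t r) { s with wrts := s.wrts \ {t} }

/-- The requirements on (full-read) thread LTSs: threads only perform their own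
thread-type actions; after invoking a read they only await its response and accept all
domain values; after invoking a write they only await its response; and operation
responses occur only immediately after the matching invocation. -/
def ThreadSys.Good (Θ : ThreadSys T R D) : Prop :=
  (∀ t (s : Θ.TS t) a s', Θ.tr t s a s' → RWAct.thr a = t ∧ RWAct.isThreadAct a) ∧
  (∀ t (s s' : Θ.TS t) t' r (d : D r), ¬ Θ.tr t s (RWAct.read t' r d) s') ∧
  (∀ t r (s m : Θ.TS t), Θ.tr t s (RWAct.startRead t r) m →
      (∀ d : D r, ∃ s', Θ.tr t m (RWAct.finishRead t r d) s') ∧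
      (∀ a s', Θ.tr t m a s' → ∃ d : D r, a = RWAct.finishRead t r d)) ∧
  (∀ t r (d : D r) (s m : Θ.TS t), Θ.tr t s (RWAct.startWrite t r d) m →
      (∃ s', Θ.tr t m (RWAct.finishWrite t r) s') ∧
      (∀ a s', Θ.tr t m a s' → a = RWAct.finishWrite t r)) ∧
  (∀ t r (d : D r) (s s' : Θ.TS t), Θ.tr t s (RWAct.finishRead t r d) s' →
      ∀ (s0 : Θ.TS t) a, Θ.tr t s0 a s → a = RWAct.startRead t r) ∧
  (∀ t r (s s' : Θ.TS t), Θ.tr t s (RWAct.finishWrite t r) s' →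
      ∀ (s0 : Θ.TS t) a, Θ.tr t s0 a s → ∃ d : D r, a = RWAct.startWrite t r d)

/-- The instant-read transform of a full-read thread system: each instant read action
abbreviates a start-read immediately followed by the matching finish-read. -/
def ThreadSys.toIR (Θ : ThreadSys T R D) : ThreadSys T R D :=
  { TS := Θ.TS
    init := Θ.init
    tr := fun t s a s' =>
      ((∀ t' r, a ≠ RWAct.startRead t' r) ∧
       (∀ t' r (d : D r), a ≠ RWAct.finishRead t' r d) ∧
       Θ.tr t s a s') ∨
      (∃ (r : R) (d : D r) (m : Θ.TS t), a = RWAct.read t r d ∧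
         Θ.tr t s (RWAct.startRead t r) m ∧ Θ.tr t m (RWAct.finishRead t r d) s') }

/-- The CSP-style parallel composition of the thread LTSs with the (full-read) atomic
register LTSs, for the memory model `mode`. -/
def MTrans (mode : OverlapMode) (Θ : ThreadSys T R D) :
    MState Θ → RWAct T R D → MState Θ → Prop := fun s a s' =>
  (∀ t, (RWAct.thr a = t ∧ RWAct.isThreadAct a → Θ.tr t (s.th t) a (s'.th t)) ∧
        (¬ (RWAct.thr a = t ∧ RWAct.isThreadAct a) → s'.th t = s.th t)) ∧
  (∀ r, (RWAct.regOf a = some r → AtoTrans mode r (s.rg r) a (s'.rg r)) ∧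
        (RWAct.regOf a ≠ some r → s'.rg r = s.rg r))

/-- The CSP-style parallel composition with the instant-read atomic register LTSs. -/
def MTransIR (Θ : ThreadSys T R D) :
    MState Θ → RWAct T R D → MState Θ → Prop := fun s a s' =>
  (∀ t, (RWAct.thr a = t ∧ RWAct.isThreadAct a → Θ.tr t (s.th t) a (s'.th t)) ∧
        (¬ (RWAct.thr a = t ∧ RWAct.isThreadAct a) → s'.th t = s.th t)) ∧
  (∀ r, (RWAct.regOf a = some r → IRAtoTrans r (s.rg r) a (s'.rg r)) ∧
        (RWAct.regOf a ≠ some r → s'.rg r = s.rg r))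

/-- The initial state of the thread-register model, with register initial values `d0`. -/
def Minit (Θ : ThreadSys T R D) (d0 : ∀ r, D r) : MState Θ :=
  { th := Θ.init
    rg := fun r => { stor := d0 r, rds := ∅, wrts := ∅, pend := ∅, recv := fun _ => d0 r } }

/-- `a` is thread-enabled by `π`: only finitely many actions of `a`'s thread occur on
`π`, and `a` is enabled in the component state of that thread after its last action. -/
def ThreadEnabled (Θ : ThreadSys T R D) (π : RawPath (MState Θ) (RWAct T R D))
    (a : RWAct T R D) : Prop :=
  ∃ k : ℕ, (k : ℕ∞) ≤ π.len ∧
    (∀ j : ℕ, k ≤ j → (j : ℕ∞) < π.len → RWAct.thr (π.acts j) ≠ RWAct.thr a) ∧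
    ∃ s', Θ.tr (RWAct.thr a) ((π.states k).th (RWAct.thr a)) a s'

/-- `π'` arises from `π` by the `i2f` transformation on action sequences: each instant
read is replaced by the sequence start-read · order-read · finish-read, other actions
are kept. -/
def IsI2F {S₁ S₂ : Type*} (π : RawPath S₁ (RWAct T R D)) (π' : RawPath S₂ (RWAct T R D)) :
    Prop :=
  ∃ f : ℕ → ℕ, f 0 = 0 ∧
    (∀ k : ℕ, (k : ℕ∞) < π.len →
      ((¬ RWAct.isReadAct (π.acts k) ∧ π'.acts (f k) = π.acts k ∧ f (k + 1) = f k + 1) ∨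
       (∃ (t : T) (r : R) (d : D r), π.acts k = RWAct.read t r d ∧
          π'.acts (f k) = RWAct.startRead t r ∧
          π'.acts (f k + 1) = RWAct.orderRead t r ∧
          π'.acts (f k + 2) = RWAct.finishRead t r d ∧
          f (k + 1) = f k + 3))) ∧
    (π.len = ⊤ → π'.len = ⊤) ∧
    (∀ n : ℕ, π.len = (n : ℕ∞) → π'.len = ((f n : ℕ) : ℕ∞))

end Comp

section Paths

variable {S A : Type*} {Tr : S → A → S → Prop} {s₀ : S} {π : RawPath S A}

lemma IsPathOf.forall_of_preserved (hπ : IsPathOf Tr s₀ π) {P : S → Prop} {Q : A → Prop}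
    (hP : ∀ s a s', Tr s a s' → ¬ Q a → P s → P s') {m j : ℕ} (hm : P (π.states m))
    (hmj : m ≤ j) (hj : (j : ℕ∞) ≤ π.len) (hQ : ∀ i, m ≤ i → i < j → ¬ Q (π.acts i)) :
    P (π.states j) := by
  induction j, hmj using Nat.le_induction with
  | base => exact hm
  | succ j hmj ih =>
    have hjlt : (j : ℕ∞) < π.len := lt_of_lt_of_le (by exact_mod_cast j.lt_succ_self) hj
    exact hP _ _ _ (hπ.2 j hjlt) (hQ j hmj j.lt_succ_self)
      (ih hjlt.le fun i hi hij => hQ i hi (hij.trans j.lt_succ_self))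

lemma IsPathOf.exists_first_of_preserved (hπ : IsPathOf Tr s₀ π) {P : S → Prop} {Q : A → Prop}
    (hP : ∀ s a s', Tr s a s' → ¬ Q a → P s → P s') {m : ℕ} (hm : P (π.states m))
    (hex : ∃ j, m ≤ j ∧ (j : ℕ∞) < π.len ∧ Q (π.acts j)) :
    ∃ j, m ≤ j ∧ (j : ℕ∞) < π.len ∧ Q (π.acts j) ∧ P (π.states j) := by
  classical
  obtain ⟨hmj, hjlen, hjQ⟩ := Nat.find_spec hex
  refine ⟨_, hmj, hjlen, hjQ, hπ.forall_of_preserved hP hm hmj hjlen.le fun i hi hij hQi => ?_⟩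
  exact Nat.find_min hex hij ⟨hi, lt_trans (by exact_mod_cast hij) hjlen, hQi⟩

end Paths

lemma exists_forall_eq_empty_of_antitone {α : Type*} {F : ℕ → Set α} {L : ℕ∞} {k : ℕ}
    (hk : (k : ℕ∞) ≤ L) (hfin : (F k).Finite)
    (hanti : ∀ i, k ≤ i → (i : ℕ∞) < L → F (i + 1) ⊆ F i)
    (hleave : ∀ x ∈ F k, ∃ m, k ≤ m ∧ (m : ℕ∞) ≤ L ∧ x ∉ F m) :
    ∃ m, k ≤ m ∧ (m : ℕ∞) ≤ L ∧ ∀ n, m ≤ n → (n : ℕ∞) ≤ L → F n = ∅ := by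
  have hanti' : ∀ i j, k ≤ i → i ≤ j → (j : ℕ∞) ≤ L → F j ⊆ F i := by
    intro i j hki hij hj
    induction j, hij using Nat.le_induction with
    | base => exact subset_rfl
    | succ j hij ih =>
      have hjlt : (j : ℕ∞) < L := lt_of_lt_of_le (by exact_mod_cast j.lt_succ_self) hj
      exact (hanti j (hki.trans hij) hjlt).trans (ih hjlt.le)
  have hleave' : ∀ x, ∃ m, k ≤ m ∧ (m : ℕ∞) ≤ L ∧ x ∉ F m := fun x => by
    by_cases hx : x ∈ F k
    exacts [hleave x hx, ⟨k, le_rfl, hk, hx⟩]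
  choose g hkg hgL hg using hleave'
  rcases (F k).eq_empty_or_nonempty with hempty | hne
  · exact ⟨k, le_rfl, hk, fun n hkn hn => Set.subset_eq_empty (hanti' k n le_rfl hkn hn) hempty⟩
  obtain ⟨x₀, -, hx₀⟩ := Set.exists_max_image (F k) g hfin hne
  refine ⟨g x₀, hkg x₀, hgL x₀, fun n hn hnL => Set.eq_empty_of_forall_notMem fun x hx => ?_⟩
  have hxk := hanti' k n le_rfl ((hkg x₀).trans hn) hnL hx
  exact hg x (hanti' (g x) n (hkg x) ((hx₀ x hxk).trans hn) hnL hx)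

section Guards

variable {T : Type} {E : Type} {mode : OverlapMode} {g : RegState T E} {u : T}

lemma gRead_FR_of_gRead (h : gRead mode g u) : gRead .FR g u := by
  cases mode <;> simp_all [gRead]

lemma notMem_wrts_of_gWrite (h : gWrite mode g u) : u ∉ g.wrts := by
  cases mode <;> simp_all [gWrite]

lemma gRead_of_wrts_eq_empty (hmode : mode ≠ .FR) (hu : u ∉ g.rds) (hw : g.wrts = ∅)
    (hr : mode = .A → g.rds = ∅) : gRead mode g u := by
  cases mode <;> simp_all [gRead]

lemma gWrite_of_wrts_eq_empty (hmode : mode ≠ .FR) (hw : g.wrts = ∅)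
    (hr : mode ≠ .S → g.rds = ∅) : gWrite mode g u := by
  cases mode <;> simp_all [gWrite]

end Guards

section Concurrency

variable {T R : Type} {D : R → Type} {mode : OverlapMode} {a b : RWAct T R D}

lemma thr_ne_of_concOf (h : concOf mode a b) : a.thr ≠ b.thr := by
  cases mode
  exacts [h, h.1.1.1, h.1.1, h.1]

lemma concOf_of_thr_ne (hns : ∀ r, ¬ a.inStart r) (h : a.thr ≠ b.thr) : concOf mode a b := by
  cases mode <;> simp_all [concOf, concA, concI, concS, concT, RWAct.inStart]

lemma concOf_startRead (hmode : mode ≠ .FR) {u : T} {q : R}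
    (h : concOf mode (.startRead u q) b) :
    ¬ b.isWriteStart q ∧ (mode = .A → ¬ b.isReadStart q) := by
  cases mode <;> simp_all [concOf, concA, concI, concS, RWAct.inStart, RWAct.isReadStart]

lemma concOf_startWrite (hmode : mode ≠ .FR) {u : T} {q : R} {d : D q}
    (h : concOf mode (.startWrite u q d) b) :
    ¬ b.isWriteStart q ∧ (mode ≠ .S → ¬ b.isReadStart q) := by
  cases mode <;> simp_all [concOf, concA, concI, concS, RWAct.inStart, RWAct.isWriteStart]

lemma JustPath.exists_thr_eq {S : Type*} {Tr : S → RWAct T R D → S → Prop}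
    {π : RawPath S (RWAct T R D)} (hj : JustPath Tr (concOf mode) Blk π) {k : ℕ}
    (hk : (k : ℕ∞) ≤ π.len) (ha : a ∉ Blk) (hns : ∀ r, ¬ a.inStart r)
    (hen : EnabledIn Tr a (π.states k)) :
    ∃ j : ℕ, k ≤ j ∧ (j : ℕ∞) < π.len ∧ (π.acts j).thr = a.thr := by
  obtain ⟨j, hkj, hj, hnc⟩ := hj k a hk ha hen
  exact ⟨j, hkj, hj, by_contra fun h => hnc (concOf_of_thr_ne hns (Ne.symm h))⟩

end Concurrency

section Invariant

variable {T R : Type} {D : R → Type} {Θ : ThreadSys T R D} {s : MState Θ} {t : T}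

def RegState.busy {E : Type} (g : RegState T E) : Set T := g.rds ∪ g.wrts

namespace ThreadSys

variable (Θ)

def AwaitingRead (t : T) (r : R) (x : Θ.TS t) : Prop :=
  (∀ d : D r, ∃ x', Θ.tr t x (.finishRead t r d) x') ∧
    ∀ a x', Θ.tr t x a x' → ∃ d : D r, a = .finishRead t r d

def AwaitingWrite (t : T) (r : R) (x : Θ.TS t) : Prop :=
  (∃ x', Θ.tr t x (.finishWrite t r) x') ∧ ∀ a x', Θ.tr t x a x' → a = .finishWrite t r

end ThreadSys

namespace MState

def Idle (s : MState Θ) (t : T) : Prop := ∀ r, t ∉ (s.rg r).rds ∧ t ∉ (s.rg r).wrts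

def ThreadInv (s : MState Θ) (t : T) : Prop :=
  s.Idle t ∨
  (∃ r, Θ.AwaitingRead t r (s.th t) ∧
    ∀ r', (t ∈ (s.rg r').rds ↔ r' = r) ∧ t ∉ (s.rg r').wrts) ∨
  (∃ r, Θ.AwaitingWrite t r (s.th t) ∧
    ∀ r', t ∉ (s.rg r').rds ∧ (t ∈ (s.rg r').wrts ↔ r' = r))

def Inv (s : MState Θ) : Prop :=
  (∀ r, (s.rg r).busy.Finite) ∧ ∀ t, s.ThreadInv t

lemma ThreadInv.of_mem_rds (h : s.ThreadInv t) {r : R} (ht : t ∈ (s.rg r).rds) :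
    Θ.AwaitingRead t r (s.th t) ∧ ∀ r', (t ∈ (s.rg r').rds ↔ r' = r) ∧ t ∉ (s.rg r').wrts := by
  rcases h with hidle | ⟨q, hA, hq⟩ | ⟨q, -, hq⟩
  · exact absurd ht (hidle r).1
  · obtain rfl := (hq r).1.mp ht
    exact ⟨hA, hq⟩
  · exact absurd ht (hq r).1

lemma ThreadInv.of_mem_wrts (h : s.ThreadInv t) {r : R} (ht : t ∈ (s.rg r).wrts) :
    Θ.AwaitingWrite t r (s.th t) ∧ ∀ r', t ∉ (s.rg r').rds ∧ (t ∈ (s.rg r').wrts ↔ r' = r) := by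
  rcases h with hidle | ⟨q, -, hq⟩ | ⟨q, hA, hq⟩
  · exact absurd ht (hidle r).2
  · exact absurd ht (hq r).2
  · obtain rfl := (hq r).2.mp ht
    exact ⟨hA, hq⟩

lemma ThreadInv.eq_of_mem_busy (h : s.ThreadInv t) {r₁ r₂ : R} (h₁ : t ∈ (s.rg r₁).busy)
    (h₂ : t ∈ (s.rg r₂).busy) : r₁ = r₂ := by
  rcases h₁ with h₁ | h₁
  · have hq := (h.of_mem_rds h₁).2 r₂
    rcases h₂ with h₂ | h₂
    exacts [(hq.1.mp h₂).symm, absurd h₂ hq.2]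
  · have hq := (h.of_mem_wrts h₁).2 r₂
    rcases h₂ with h₂ | h₂
    exacts [absurd h₂ hq.1, (hq.2.mp h₂).symm]

lemma Inv.init (d0 : ∀ r, D r) : (Minit Θ d0).Inv := by
  simp [Inv, ThreadInv, Idle, Minit, RegState.busy]

end MState

end Invariant

section Transitions

variable {T R : Type} {D : R → Type} [DecidableEq T]

namespace AtoTrans

variable {mode : OverlapMode} {r : R} {g g' : RegState T (D r)} {b : RWAct T R D}

lemma mem_rds_iff (h : AtoTrans mode r g b g') (t : T) :
    t ∈ g'.rds ↔ b = .startRead t r ∨ (t ∈ g.rds ∧ ∀ d, b ≠ .finishRead t r d) := by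
  cases h <;> simp [eq_comm]

lemma mem_wrts_iff (h : AtoTrans mode r g b g') (t : T) :
    t ∈ g'.wrts ↔ (∃ d, b = .startWrite t r d) ∨ (t ∈ g.wrts ∧ b ≠ .finishWrite t r) := by
  cases h <;> simp [eq_comm]

lemma mem_pend_iff (h : AtoTrans mode r g b g') (t : T) :
    t ∈ g'.pend ↔ b = .startRead t r ∨ (∃ d, b = .startWrite t r d) ∨
      (t ∈ g.pend ∧ b ≠ .orderRead t r ∧ b ≠ .orderWrite t r) := by
  cases h <;> simp [eq_comm]

lemma of_not_isThreadAct (h : AtoTrans mode r g b g') (hb : ¬ b.isThreadAct) :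
    b.thr ∈ g.busy ∧ b.thr ∈ g.pend ∧ g'.rds = g.rds ∧ g'.wrts = g.wrts ∧ b.thr ∉ g'.pend := by
  cases h <;> simp_all [RWAct.isThreadAct, RWAct.thr, RegState.busy]

lemma gRead_of_startRead {t : T} (h : AtoTrans mode r g (.startRead t r) g') :
    gRead mode g t := by
  cases h
  assumption

lemma not_read {t : T} {r' : R} {d : D r'} : ¬ AtoTrans mode r g (.read t r' d) g' := by
  rintro ⟨⟩

lemma of_guards {m : OverlapMode} (h : AtoTrans mode r g b g')
    (hR : ∀ t, b = .startRead t r → gRead mode g t → gRead m g t)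
    (hW : ∀ t d, b = .startWrite t r d → gWrite mode g t → gWrite m g t) :
    AtoTrans m r g b g' := by
  cases h with
  | startRead t hg => exact .startRead _ t (hR t rfl hg)
  | orderRead t h₁ h₂ => exact .orderRead _ t h₁ h₂
  | finishRead t h₁ h₂ => exact .finishRead _ t h₁ h₂
  | startWrite t d hg => exact .startWrite _ t d (hW t d rfl hg)
  | orderWrite t h₁ h₂ => exact .orderWrite _ t h₁ h₂
  | finishWrite t h₁ h₂ => exact .finishWrite _ t h₁ h₂

end AtoTrans

namespace MTrans

variable {Θ : ThreadSys T R D} {mode : OverlapMode} {s s' : MState Θ} {b : RWAct T R D}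
  {t : T} {q : R}

lemma of_guards {m : OverlapMode} (hM : MTrans mode Θ s b s')
    (hR : ∀ t r, b = .startRead t r → gRead mode (s.rg r) t → gRead m (s.rg r) t)
    (hW : ∀ t r d, b = .startWrite t r d → gWrite mode (s.rg r) t → gWrite m (s.rg r) t) :
    MTrans m Θ s b s' :=
  ⟨hM.1, fun r => ⟨fun hr => ((hM.2 r).1 hr).of_guards (hR · r) (hW · r), (hM.2 r).2⟩⟩

lemma th_eq (hM : MTrans mode Θ s b s') (h : ¬ (b.thr = t ∧ b.isThreadAct)) :
    s'.th t = s.th t :=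
  (hM.1 t).2 h

lemma mem_rds_iff (hM : MTrans mode Θ s b s') (t : T) (r : R) :
    t ∈ (s'.rg r).rds ↔
      b = .startRead t r ∨ (t ∈ (s.rg r).rds ∧ ∀ d, b ≠ .finishRead t r d) := by
  by_cases hr : b.regOf = some r
  · exact ((hM.2 r).1 hr).mem_rds_iff t
  · rw [(hM.2 r).2 hr]
    cases b <;> simp_all [RWAct.regOf]

lemma mem_wrts_iff (hM : MTrans mode Θ s b s') (t : T) (r : R) :
    t ∈ (s'.rg r).wrts ↔
      (∃ d, b = .startWrite t r d) ∨ (t ∈ (s.rg r).wrts ∧ b ≠ .finishWrite t r) := by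
  by_cases hr : b.regOf = some r
  · exact ((hM.2 r).1 hr).mem_wrts_iff t
  · rw [(hM.2 r).2 hr]
    cases b <;> simp_all [RWAct.regOf]

lemma mem_pend_iff (hM : MTrans mode Θ s b s') (t : T) (r : R) :
    t ∈ (s'.rg r).pend ↔ b = .startRead t r ∨ (∃ d, b = .startWrite t r d) ∨
      (t ∈ (s.rg r).pend ∧ b ≠ .orderRead t r ∧ b ≠ .orderWrite t r) := by
  by_cases hr : b.regOf = some r
  · exact ((hM.2 r).1 hr).mem_pend_iff t
  · rw [(hM.2 r).2 hr]
    cases b <;> simp_all [RWAct.regOf]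

lemma mem_rds_wrts_iff_of_not_participates (hM : MTrans mode Θ s b s')
    (h : ¬ (b.thr = t ∧ b.isThreadAct)) (r : R) :
    (t ∈ (s'.rg r).rds ↔ t ∈ (s.rg r).rds) ∧ (t ∈ (s'.rg r).wrts ↔ t ∈ (s.rg r).wrts) := by
  rw [hM.mem_rds_iff, hM.mem_wrts_iff]
  cases b <;> simp_all [RWAct.thr, RWAct.isThreadAct]

lemma mem_pend_iff_of_thr_ne (hM : MTrans mode Θ s b s') (h : b.thr ≠ t) (r : R) :
    t ∈ (s'.rg r).pend ↔ t ∈ (s.rg r).pend := by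
  rw [hM.mem_pend_iff]
  cases b <;> simp_all [RWAct.thr]

lemma mem_busy_iff_of_thr_ne (hM : MTrans mode Θ s b s') (h : b.thr ≠ t) :
    t ∈ (s'.rg q).busy ↔ t ∈ (s.rg q).busy := by
  have := hM.mem_rds_wrts_iff_of_not_participates (t := t) (fun hb => h hb.1) q
  simp only [RegState.busy, Set.mem_union, this.1, this.2]

lemma wrts_subset (hM : MTrans mode Θ s b s') (h : ¬ b.isWriteStart q) :
    (s'.rg q).wrts ⊆ (s.rg q).wrts := fun t ht => by
  rcases (hM.mem_wrts_iff t q).mp ht with ⟨d, rfl⟩ | ⟨ht, -⟩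
  exacts [(h rfl).elim, ht]

lemma rds_subset (hM : MTrans mode Θ s b s') (h : ¬ b.isReadStart q) :
    (s'.rg q).rds ⊆ (s.rg q).rds := fun t ht => by
  rcases (hM.mem_rds_iff t q).mp ht with rfl | ⟨ht, -⟩
  exacts [(h rfl).elim, ht]

end MTrans

lemma enabledIn_MTrans {Θ : ThreadSys T R D} {mode : OverlapMode} {s : MState Θ}
    {b : RWAct T R D} {r : R} {g : RegState T (D r)} (hr : b.regOf = some r)
    (hth : b.isThreadAct → ∃ x, Θ.tr b.thr (s.th b.thr) b x)
    (hA : AtoTrans mode r (s.rg r) b g) : EnabledIn (MTrans mode Θ) b s := by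
  classical
  have hrg : ∀ q, (b.regOf = some q → AtoTrans mode q (s.rg q) b (Function.update s.rg r g q)) ∧
      (b.regOf ≠ some q → Function.update s.rg r g q = s.rg q) := by
    intro q
    refine ⟨fun hq => ?_, fun hq => Function.update_of_ne (fun h => hq (h ▸ hr : _)) _ _⟩
    obtain rfl : q = r := Option.some_injective _ (hq.symm.trans hr)
    simpa using hA
  by_cases hact : b.isThreadAct
  · obtain ⟨x, hx⟩ := hth hact
    refine ⟨⟨Function.update s.th b.thr x, Function.update s.rg r g⟩,
      fun t => ⟨?_, fun ht => ?_⟩, hrg⟩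
    · rintro ⟨rfl, -⟩
      simpa using hx
    · exact Function.update_of_ne (fun h => ht ⟨h.symm, hact⟩) _ _
  · exact ⟨⟨s.th, Function.update s.rg r g⟩,
      fun t => ⟨fun h => absurd h.2 hact, fun _ => rfl⟩, hrg⟩

end Transitions

section Reachable

variable {T R : Type} {D : R → Type} [DecidableEq T] {Θ : ThreadSys T R D}
  {mode : OverlapMode} {s s' : MState Θ} {b : RWAct T R D} {t : T} {q : R}

namespace MState

lemma ThreadInv.of_step_of_not_participates (h : s.ThreadInv t) (hM : MTrans mode Θ s b s')
    (hp : ¬ (b.thr = t ∧ b.isThreadAct)) : s'.ThreadInv t := by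
  have hrds : ∀ r, t ∈ (s'.rg r).rds ↔ t ∈ (s.rg r).rds := fun r =>
    (hM.mem_rds_wrts_iff_of_not_participates hp r).1
  have hwrts : ∀ r, t ∈ (s'.rg r).wrts ↔ t ∈ (s.rg r).wrts := fun r =>
    (hM.mem_rds_wrts_iff_of_not_participates hp r).2
  simpa only [ThreadInv, Idle, hM.th_eq hp, hrds, hwrts] using h

lemma Idle.threadInv_of_step (hΘ : Θ.Good) (hidle : s.Idle t) (hM : MTrans mode Θ s b s')
    (hp : b.thr = t ∧ b.isThreadAct) : s'.ThreadInv t := by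
  have htr : Θ.tr t (s.th t) b (s'.th t) := (hM.1 t).1 hp
  by_cases hR : ∃ q, b = .startRead t q
  · obtain ⟨q, rfl⟩ := hR
    refine Or.inr (Or.inl ⟨q, hΘ.2.2.1 t q _ _ htr, fun r => ?_⟩)
    simp [hM.mem_rds_iff, hM.mem_wrts_iff, hidle r, eq_comm]
  by_cases hW : ∃ q d, b = .startWrite t q d
  · obtain ⟨q, d, rfl⟩ := hW
    refine Or.inr (Or.inr ⟨q, hΘ.2.2.2.1 t q d _ _ htr, fun r => ?_⟩)
    simp [hM.mem_rds_iff, hM.mem_wrts_iff, hidle r, eq_comm]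
    rintro rfl
    exact ⟨d, .rfl⟩
  push Not at hR hW
  exact Or.inl fun r => by simp [hM.mem_rds_iff, hM.mem_wrts_iff, hidle r, hR r, hW r]

lemma ThreadInv.idle_of_step (h : s.ThreadInv t) (hbusy : ¬ s.Idle t)
    (hM : MTrans mode Θ s b s') (hp : b.thr = t ∧ b.isThreadAct) : s'.Idle t := by
  have htr : Θ.tr t (s.th t) b (s'.th t) := (hM.1 t).1 hp
  rcases h with hidle | ⟨q, hA, hq⟩ | ⟨q, hA, hq⟩
  · exact absurd hidle hbusy
  · obtain ⟨d, rfl⟩ := hA.2 _ _ htr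
    intro r
    simp [hM.mem_rds_iff, hM.mem_wrts_iff, hq r]
    rintro rfl
    exact ⟨rfl, d, .rfl⟩
  · obtain rfl := hA.2 _ _ htr
    intro r
    simp [hM.mem_rds_iff, hM.mem_wrts_iff, hq r, eq_comm]

lemma Inv.step (hΘ : Θ.Good) (hinv : s.Inv) (hM : MTrans mode Θ s b s') : s'.Inv := by
  refine ⟨fun r => ((hinv.1 r).insert b.thr).subset ?_, fun t => ?_⟩
  · rintro t (ht | ht)
    · rcases (hM.mem_rds_iff t r).mp ht with rfl | ⟨ht, -⟩
      exacts [Set.mem_insert _ _, Set.mem_insert_of_mem _ (Or.inl ht)]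
    · rcases (hM.mem_wrts_iff t r).mp ht with ⟨d, rfl⟩ | ⟨ht, -⟩
      exacts [Set.mem_insert _ _, Set.mem_insert_of_mem _ (Or.inr ht)]
  by_cases hp : b.thr = t ∧ b.isThreadAct
  · by_cases hidle : s.Idle t
    · exact hidle.threadInv_of_step hΘ hM hp
    · exact Or.inl ((hinv.2 t).idle_of_step hidle hM hp)
  · exact (hinv.2 t).of_step_of_not_participates hM hp

lemma Inv.of_isPathOf (hΘ : Θ.Good) {d0 : ∀ r, D r} {π : RawPath (MState Θ) (RWAct T R D)}
    (hπ : IsPathOf (MTrans mode Θ) (Minit Θ d0) π) (i : ℕ) (hi : (i : ℕ∞) ≤ π.len) :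
    (π.states i).Inv :=
  hπ.forall_of_preserved (Q := fun _ => False) (fun _ _ _ hM _ h => h.step hΘ hM)
    (by rw [hπ.1]; exact Inv.init d0) (Nat.zero_le i) hi fun _ _ _ => id

lemma Inv.exists_enabled_of_mem_busy (hinv : s.Inv) (ht : t ∈ (s.rg q).busy) :
    ∃ a : RWAct T R D, a.thr = t ∧ a ∉ Blk ∧ (∀ r, ¬ a.inStart r) ∧
      EnabledIn (MTrans mode Θ) a s := by
  by_cases hp : t ∈ (s.rg q).pend <;> rcases ht with ht | ht
  · exact ⟨.orderRead t q, rfl, by rintro ⟨_, ⟨⟩⟩, fun _ h => h.elim id id,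
      enabledIn_MTrans rfl False.elim (.orderRead _ t ht hp)⟩
  · exact ⟨.orderWrite t q, rfl, by rintro ⟨_, ⟨⟩⟩, fun _ h => h.elim id id,
      enabledIn_MTrans rfl False.elim (.orderWrite _ t ht hp)⟩
  · obtain ⟨x, hx⟩ := ((hinv.2 t).of_mem_rds ht).1.1 ((s.rg q).recv t)
    exact ⟨.finishRead t q _, rfl, by rintro ⟨_, ⟨⟩⟩, fun _ h => h.elim id id,
      enabledIn_MTrans rfl (fun _ => ⟨x, hx⟩) (.finishRead _ t ht hp)⟩
  · obtain ⟨x, hx⟩ := ((hinv.2 t).of_mem_wrts ht).1.1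
    exact ⟨.finishWrite t q, rfl, by rintro ⟨_, ⟨⟩⟩, fun _ h => h.elim id id,
      enabledIn_MTrans rfl (fun _ => ⟨x, hx⟩) (.finishWrite _ t ht hp)⟩

end MState

lemma MTrans.to_FR (hinv : s.Inv) (hM : MTrans mode Θ s b s') : MTrans .FR Θ s b s' := by
  refine hM.of_guards (fun _ _ _ => gRead_FR_of_gRead)
    fun t r d hb hg => ⟨fun ht => ?_, notMem_wrts_of_gWrite hg⟩
  -- a thread inside a read can only finish it
  subst hb
  obtain ⟨d', hd'⟩ := ((hinv.2 t).of_mem_rds ht).1.2 _ _ ((hM.1 t).1 ⟨rfl, trivial⟩)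
  cases hd'

/-- A step of a thread inside an operation on `q` is its order step or its finish step. -/
lemma MTrans.of_mem_busy (hinv : s.Inv) (hM : MTrans mode Θ s b s') (hthr : b.thr = t)
    (ht : t ∈ (s.rg q).busy) :
    (t ∈ (s.rg q).pend ∧ t ∈ (s'.rg q).busy ∧ t ∉ (s'.rg q).pend) ∨ t ∉ (s'.rg q).busy := by
  by_cases hact : b.isThreadAct
  · have hbusy : ¬ s.Idle t := fun h => by
      rcases ht with ht | ht
      exacts [(h q).1 ht, (h q).2 ht]
    have hidle := (hinv.2 t).idle_of_step hbusy hM ⟨hthr, hact⟩ q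
    exact Or.inr fun h => by rcases h with h | h; exacts [hidle.1 h, hidle.2 h]
  obtain ⟨r, hr⟩ : ∃ r, b.regOf = some r := by
    cases b <;> simp_all [RWAct.isThreadAct, RWAct.regOf]
  obtain ⟨hbusy, hpend, hrds, hwrts, hpend'⟩ := ((hM.2 r).1 hr).of_not_isThreadAct hact
  subst hthr
  obtain rfl := (hinv.2 b.thr).eq_of_mem_busy hbusy ht
  exact Or.inl ⟨hpend, by rwa [RegState.busy, hrds, hwrts], hpend'⟩

end Reachable

section JustPaths

variable {T R : Type} {D : R → Type} [DecidableEq T] {Θ : ThreadSys T R D}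
  {mode : OverlapMode} {s₀ : MState Θ} {π : RawPath (MState Θ) (RWAct T R D)} {t : T} {q : R}

lemma IsPathOf.thread_unchanged (hπ : IsPathOf (MTrans mode Θ) s₀ π) {k m : ℕ} (hkm : k ≤ m)
    (hm : (m : ℕ∞) ≤ π.len) (ht : ∀ j : ℕ, k ≤ j → j < m → (π.acts j).thr ≠ t) :
    (π.states m).th t = (π.states k).th t ∧ ∀ r,
      (t ∈ ((π.states m).rg r).rds ↔ t ∈ ((π.states k).rg r).rds) ∧
      (t ∈ ((π.states m).rg r).wrts ↔ t ∈ ((π.states k).rg r).wrts) := by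
  refine hπ.forall_of_preserved (Q := fun b => b.thr = t)
    (P := fun s => s.th t = (π.states k).th t ∧ ∀ r,
      (t ∈ (s.rg r).rds ↔ t ∈ ((π.states k).rg r).rds) ∧
      (t ∈ (s.rg r).wrts ↔ t ∈ ((π.states k).rg r).wrts))
    (fun s b s' hM hb ⟨hth, hmem⟩ => ?_) ⟨rfl, fun _ => ⟨Iff.rfl, Iff.rfl⟩⟩ hkm hm ht
  have hp : ¬ (b.thr = t ∧ b.isThreadAct) := fun h => hb h.1
  have hstep := hM.mem_rds_wrts_iff_of_not_participates hp
  exact ⟨(hM.th_eq hp).trans hth, fun r =>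
    ⟨(hstep r).1.trans (hmem r).1, (hstep r).2.trans (hmem r).2⟩⟩

lemma exists_first_step_of_mem_busy (hπ : IsPathOf (MTrans mode Θ) s₀ π)
    (hinv : ∀ i : ℕ, (i : ℕ∞) ≤ π.len → (π.states i).Inv)
    (hj : JustPath (MTrans mode Θ) (concOf mode) Blk π) {m : ℕ} (hm : (m : ℕ∞) ≤ π.len)
    (ht : t ∈ ((π.states m).rg q).busy) :
    ∃ j : ℕ, m ≤ j ∧ (j : ℕ∞) < π.len ∧ (π.acts j).thr = t ∧
      t ∈ ((π.states j).rg q).busy ∧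
      (t ∈ ((π.states j).rg q).pend ↔ t ∈ ((π.states m).rg q).pend) := by
  obtain ⟨a, rfl, ha, hns, hen⟩ := (hinv m hm).exists_enabled_of_mem_busy (mode := mode) ht
  exact hπ.exists_first_of_preserved (Q := fun b => b.thr = a.thr)
    (P := fun s => a.thr ∈ (s.rg q).busy ∧
      (a.thr ∈ (s.rg q).pend ↔ a.thr ∈ ((π.states m).rg q).pend))
    (fun s b s' hM hb ⟨hbusy, hpend⟩ =>
      ⟨(hM.mem_busy_iff_of_thr_ne hb).mpr hbusy, (hM.mem_pend_iff_of_thr_ne hb q).trans hpend⟩)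
    ⟨ht, Iff.rfl⟩ (hj.exists_thr_eq hm ha hns hen)

lemma exists_notMem_busy (hπ : IsPathOf (MTrans mode Θ) s₀ π)
    (hinv : ∀ i : ℕ, (i : ℕ∞) ≤ π.len → (π.states i).Inv)
    (hj : JustPath (MTrans mode Θ) (concOf mode) Blk π) {m : ℕ} (hm : (m : ℕ∞) ≤ π.len)
    (ht : t ∈ ((π.states m).rg q).busy) :
    ∃ m' : ℕ, m ≤ m' ∧ (m' : ℕ∞) ≤ π.len ∧ t ∉ ((π.states m').rg q).busy := by
  have hunpending : ∀ m : ℕ, (m : ℕ∞) ≤ π.len → t ∈ ((π.states m).rg q).busy →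
      t ∉ ((π.states m).rg q).pend →
      ∃ m' : ℕ, m ≤ m' ∧ (m' : ℕ∞) ≤ π.len ∧ t ∉ ((π.states m').rg q).busy := by
    intro m hm ht hp
    obtain ⟨j, hmj, hj, hthr, hbusy, hpend⟩ := exists_first_step_of_mem_busy hπ hinv hj hm ht
    rcases (hπ.2 j hj).of_mem_busy (hinv j hj.le) hthr hbusy with ⟨hp', -⟩ | hfree
    · exact absurd (hpend.mp hp') hp
    · exact ⟨j + 1, by omega, by exact_mod_cast Order.add_one_le_of_lt hj, hfree⟩
  by_cases hp : t ∈ ((π.states m).rg q).pend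
  · obtain ⟨j, hmj, hj, hthr, hbusy, -⟩ := exists_first_step_of_mem_busy hπ hinv hj hm ht
    rcases (hπ.2 j hj).of_mem_busy (hinv j hj.le) hthr hbusy with ⟨-, hbusy', hp'⟩ | hfree
    · obtain ⟨m', hjm', hm', hfree⟩ :=
        hunpending (j + 1) (by exact_mod_cast Order.add_one_le_of_lt hj) hbusy' hp'
      exact ⟨m', by omega, hm', hfree⟩
    · exact ⟨j + 1, by omega, by exact_mod_cast Order.add_one_le_of_lt hj, hfree⟩
  · exact hunpending m hm ht hp

lemma eventually_wrts_eq_empty (hπ : IsPathOf (MTrans mode Θ) s₀ π)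
    (hinv : ∀ i : ℕ, (i : ℕ∞) ≤ π.len → (π.states i).Inv)
    (hj : JustPath (MTrans mode Θ) (concOf mode) Blk π) {k : ℕ} (hk : (k : ℕ∞) ≤ π.len)
    (hW : ∀ j : ℕ, k ≤ j → (j : ℕ∞) < π.len → ¬ (π.acts j).isWriteStart q) :
    ∃ m : ℕ, k ≤ m ∧ (m : ℕ∞) ≤ π.len ∧
      ∀ n : ℕ, m ≤ n → (n : ℕ∞) ≤ π.len → ((π.states n).rg q).wrts = ∅ :=
  exists_forall_eq_empty_of_antitone hk (((hinv k hk).1 q).subset Set.subset_union_right)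
    (fun i hki hi => (hπ.2 i hi).wrts_subset (hW i hki hi)) fun _ ht =>
      let ⟨m, hkm, hm, hfree⟩ := exists_notMem_busy hπ hinv hj hk (Or.inr ht)
      ⟨m, hkm, hm, fun h => hfree (Or.inr h)⟩

lemma eventually_rds_eq_empty (hπ : IsPathOf (MTrans mode Θ) s₀ π)
    (hinv : ∀ i : ℕ, (i : ℕ∞) ≤ π.len → (π.states i).Inv)
    (hj : JustPath (MTrans mode Θ) (concOf mode) Blk π) {k : ℕ} (hk : (k : ℕ∞) ≤ π.len)
    (hR : ∀ j : ℕ, k ≤ j → (j : ℕ∞) < π.len → ¬ (π.acts j).isReadStart q) :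
    ∃ m : ℕ, k ≤ m ∧ (m : ℕ∞) ≤ π.len ∧
      ∀ n : ℕ, m ≤ n → (n : ℕ∞) ≤ π.len → ((π.states n).rg q).rds = ∅ :=
  exists_forall_eq_empty_of_antitone hk (((hinv k hk).1 q).subset Set.subset_union_left)
    (fun i hki hi => (hπ.2 i hi).rds_subset (hR i hki hi)) fun _ ht =>
      let ⟨m, hkm, hm, hfree⟩ := exists_notMem_busy hπ hinv hj hk (Or.inl ht)
      ⟨m, hkm, hm, fun h => hfree (Or.inl h)⟩

lemma exists_quiescent (hπ : IsPathOf (MTrans mode Θ) s₀ π)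
    (hinv : ∀ i : ℕ, (i : ℕ∞) ≤ π.len → (π.states i).Inv)
    (hj : JustPath (MTrans mode Θ) (concOf mode) Blk π) {k : ℕ} (hk : (k : ℕ∞) ≤ π.len)
    (hW : ∀ j : ℕ, k ≤ j → (j : ℕ∞) < π.len → ¬ (π.acts j).isWriteStart q) (blocksReads : Prop)
    (hR : blocksReads → ∀ j : ℕ, k ≤ j → (j : ℕ∞) < π.len → ¬ (π.acts j).isReadStart q) :
    ∃ m : ℕ, k ≤ m ∧ (m : ℕ∞) ≤ π.len ∧ ((π.states m).rg q).wrts = ∅ ∧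
      (blocksReads → ((π.states m).rg q).rds = ∅) := by
  obtain ⟨m₁, hkm₁, hm₁, hw⟩ := eventually_wrts_eq_empty hπ hinv hj hk hW
  by_cases hb : blocksReads
  · obtain ⟨m₂, hm₁₂, hm₂, hr⟩ :=
      eventually_rds_eq_empty hπ hinv hj hm₁ fun j hj₁ => hR hb j (hkm₁.trans hj₁)
    exact ⟨m₂, hkm₁.trans hm₁₂, hm₂, hw m₂ hm₁₂ hm₂, fun _ => hr m₂ le_rfl hm₂⟩
  · exact ⟨m₁, hkm₁, hm₁, hw m₁ le_rfl hm₁, (absurd · hb)⟩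

lemma exists_enabled_startRead (hmode : mode ≠ .FR) (hπ : IsPathOf (MTrans mode Θ) s₀ π)
    (hinv : ∀ i : ℕ, (i : ℕ∞) ≤ π.len → (π.states i).Inv)
    (hj : JustPath (MTrans mode Θ) (concOf mode) Blk π) {k : ℕ} (hk : (k : ℕ∞) ≤ π.len)
    {u : T} (hen : EnabledIn (MTrans .FR Θ) (.startRead u q) (π.states k))
    (hconc : ∀ j : ℕ, k ≤ j → (j : ℕ∞) < π.len → concOf mode (.startRead u q) (π.acts j)) :
    ∃ m : ℕ, k ≤ m ∧ (m : ℕ∞) ≤ π.len ∧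
      EnabledIn (MTrans mode Θ) (.startRead u q) (π.states m) := by
  obtain ⟨s', hs'⟩ := hen
  obtain ⟨m, hkm, hm, hw, hr⟩ := exists_quiescent hπ hinv hj hk
    (fun j h₁ h₂ => (concOf_startRead hmode (hconc j h₁ h₂)).1) (mode = .A)
    fun hA j h₁ h₂ => (concOf_startRead hmode (hconc j h₁ h₂)).2 hA
  obtain ⟨hth, hmem⟩ := hπ.thread_unchanged hkm hm fun j h₁ h₂ =>
    (thr_ne_of_concOf (hconc j h₁ (lt_of_lt_of_le (by exact_mod_cast h₂) hm))).symm
  have hu : u ∉ ((π.states k).rg q).rds := ((hs'.2 q).1 rfl).gRead_of_startRead.1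
  refine ⟨m, hkm, hm, enabledIn_MTrans rfl (fun _ => ⟨s'.th u, ?_⟩)
    (.startRead _ u (gRead_of_wrts_eq_empty hmode (mt (hmem q).1.mp hu) hw hr))⟩
  exact hth ▸ (hs'.1 u).1 ⟨rfl, trivial⟩

lemma exists_enabled_startWrite (hmode : mode ≠ .FR) (hπ : IsPathOf (MTrans mode Θ) s₀ π)
    (hinv : ∀ i : ℕ, (i : ℕ∞) ≤ π.len → (π.states i).Inv)
    (hj : JustPath (MTrans mode Θ) (concOf mode) Blk π) {k : ℕ} (hk : (k : ℕ∞) ≤ π.len)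
    {u : T} {d : D q} (hen : EnabledIn (MTrans .FR Θ) (.startWrite u q d) (π.states k))
    (hconc : ∀ j : ℕ, k ≤ j → (j : ℕ∞) < π.len → concOf mode (.startWrite u q d) (π.acts j)) :
    ∃ m : ℕ, k ≤ m ∧ (m : ℕ∞) ≤ π.len ∧
      EnabledIn (MTrans mode Θ) (.startWrite u q d) (π.states m) := by
  obtain ⟨s', hs'⟩ := hen
  obtain ⟨m, hkm, hm, hw, hr⟩ := exists_quiescent hπ hinv hj hk
    (fun j h₁ h₂ => (concOf_startWrite hmode (hconc j h₁ h₂)).1) (mode ≠ .S)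
    fun hS j h₁ h₂ => (concOf_startWrite hmode (hconc j h₁ h₂)).2 hS
  obtain ⟨hth, -⟩ := hπ.thread_unchanged hkm hm fun j h₁ h₂ =>
    (thr_ne_of_concOf (hconc j h₁ (lt_of_lt_of_le (by exact_mod_cast h₂) hm))).symm
  refine ⟨m, hkm, hm, enabledIn_MTrans rfl (fun _ => ⟨s'.th u, ?_⟩)
    (.startWrite _ u d (gWrite_of_wrts_eq_empty hmode hw hr))⟩
  exact hth ▸ (hs'.1 u).1 ⟨rfl, trivial⟩

lemma exists_enabled_of_forall_concOf (hmode : mode ≠ .FR)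
    (hπ : IsPathOf (MTrans mode Θ) s₀ π) (hinv : ∀ i : ℕ, (i : ℕ∞) ≤ π.len → (π.states i).Inv)
    (hj : JustPath (MTrans mode Θ) (concOf mode) Blk π) {k : ℕ} (hk : (k : ℕ∞) ≤ π.len)
    {a : RWAct T R D} (hen : EnabledIn (MTrans .FR Θ) a (π.states k))
    (hconc : ∀ j : ℕ, k ≤ j → (j : ℕ∞) < π.len → concOf mode a (π.acts j)) :
    ∃ m : ℕ, k ≤ m ∧ (m : ℕ∞) ≤ π.len ∧ EnabledIn (MTrans mode Θ) a (π.states m) := by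
  cases a
  case startRead u q => exact exists_enabled_startRead hmode hπ hinv hj hk hen hconc
  case startWrite u q d => exact exists_enabled_startWrite hmode hπ hinv hj hk hen hconc
  case read u q d =>
    obtain ⟨s', hs'⟩ := hen
    exact absurd ((hs'.2 q).1 rfl) AtoTrans.not_read
  all_goals
    obtain ⟨s', hs'⟩ := hen
    exact ⟨k, le_rfl, hk, s', hs'.of_guards (by simp) (by simp)⟩

end JustPaths

theorem restricted_just_path_is_full_just_path_general
    {T R : Type} {D : R → Type} [DecidableEq T]
    (Θ : ThreadSys T R D) (hΘ : Θ.Good) (d0 : ∀ r, D r)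
    (mode : OverlapMode)
    (π : RawPath (MState Θ) (RWAct T R D))
    (hπ : IsPathOf (MTrans mode Θ) (Minit Θ d0) π)
    (hj : JustPath (MTrans mode Θ) (concOf mode) Blk π) :
    IsPathOf (MTrans OverlapMode.FR Θ) (Minit Θ d0) π ∧
      JustPath (MTrans OverlapMode.FR Θ) (concOf mode) Blk π := by
  have hinv := MState.Inv.of_isPathOf hΘ hπ
  refine ⟨⟨hπ.1, fun i hi => (hπ.2 i hi).to_FR (hinv i hi.le)⟩, ?_⟩
  rcases eq_or_ne mode .FR with rfl | hmode
  · exact hj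
  intro k a hk ha hen
  by_contra! hconc
  obtain ⟨m, hkm, hm, hen'⟩ := exists_enabled_of_forall_concOf hmode hπ hinv hj hk hen hconc
  obtain ⟨j, hmj, hjlen, hnc⟩ := hj m a hm ha hen'
  exact hnc (hconc j (hkm.trans hmj) hjlen)

/-- Any `C`-complete (i.e. `B`-`⌣_C`-just) path of the overlap-restricted model `M_C`
(`C ∈ {A, I, S}`) starting in its initial state is also a `C`-complete path of the
unrestricted full-read atomic model `M_FR` starting in its initial state. -/
theorem restricted_just_path_is_full_just_path
    {T R : Type} {D : R → Type} [DecidableEq T]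
    (Θ : ThreadSys T R D) (hΘ : Θ.Good) (d0 : ∀ r, D r)
    (mode : OverlapMode)
    (hmode : mode = OverlapMode.A ∨ mode = OverlapMode.I ∨ mode = OverlapMode.S)
    (π : RawPath (MState Θ) (RWAct T R D))
    (hπ : IsPathOf (MTrans mode Θ) (Minit Θ d0) π)
    (hj : JustPath (MTrans mode Θ) (concOf mode) Blk π) :
    IsPathOf (MTrans OverlapMode.FR Θ) (Minit Θ d0) π ∧
      JustPath (MTrans OverlapMode.FR Θ) (concOf mode) Blk π :=
  restricted_just_path_is_full_just_path_general Θ hΘ d0 mode π hπ hj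
end

section
/- If π is a B-⌣_C-just path from the initial state of the instant-read model M_IR (C ∈ {T,S,I,A}), then the full-read path π' obtained by the i2f transformation (replacing each read(t,r,d) with start_read(t,r)·finish_read(t,r,d), or start_read(t,r)·order_read(t,r)·finish_read(t,r,d) for atomic r) is a B-⌣_C-just path from the initial state of M_FR; consequently ℓ⁻(π') = ℓ⁻(π) and WCT_C(M_IR) ⊆ WCT_C(M_FR). -/
/-!
An instant read `read t r d` is replayed in `M_FR` as a start-read, order-read and finish-read
performed back to back, so every state of `π` is simulated by a state of `i2f π` in which no
read is in progress (`Simulates`). Justness carries over in two cases. At a block boundary,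
an action enabled in `M_FR` has a counterpart enabled in `M_IR` (a start-read becomes a read,
which the thread accepts since it accepts every returned value) that no interference
relation tells apart from it, so justness of `π` supplies an interfering action. Inside the
block of a read by thread `t`, an action of `t` is interfered with by the block itself, and an
action of another thread stays enabled until the block ends, since actions of `t` change
nothing that another thread can observe in a full-read register (`RegState.AgreeAt`).
-/

section WeakTrace

variable {S S' A : Type*} {vis : A → Prop} {π : RawPath S A} {π' : RawPath S' A}

theorem isEllMinus_iff_of_strictMono {f : ℕ → ℕ} (hf : StrictMono f)
    (hlen : ∀ k : ℕ, (f k : ℕ∞) < π'.len ↔ (k : ℕ∞) < π.len)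
    (hact : ∀ k : ℕ, (k : ℕ∞) < π.len → vis (π.acts k) ∨ vis (π'.acts (f k)) →
      π'.acts (f k) = π.acts k)
    (hrange : ∀ j : ℕ, (j : ℕ∞) < π'.len → vis (π'.acts j) → ∃ k, f k = j)
    (w : ℕ → Option A) :
    IsEllMinus vis π w ↔ IsEllMinus vis π' w := by
  constructor
  · rintro ⟨m, φ, hφ, hprop, hnone, hsurj⟩
    refine ⟨m, f ∘ φ, fun i j hi hj hij => hf (hφ i j hi hj hij), fun i hi => ?_, hnone, ?_⟩
    · obtain ⟨hlt, hv, hw⟩ := hprop i hi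
      rw [Function.comp_apply, hact _ hlt (.inl hv)]
      exact ⟨(hlen _).2 hlt, hv, hw⟩
    · rintro j hj hv
      obtain ⟨k, rfl⟩ := hrange j hj hv
      have hk := (hlen k).1 hj
      obtain ⟨i, hi, rfl⟩ := hsurj k hk (hact k hk (.inr hv) ▸ hv)
      exact ⟨i, hi, rfl⟩
  · rintro ⟨m, ψ, hψ, hprop, hnone, hsurj⟩
    have hinv : ∀ i : ℕ, (i : ℕ∞) < m → f (Function.invFun f (ψ i)) = ψ i := fun i hi =>
      Function.invFun_eq (hrange _ (hprop i hi).1 (hprop i hi).2.1)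
    refine ⟨m, Function.invFun f ∘ ψ, fun i j hi hj hij => ?_, fun i hi => ?_, hnone, ?_⟩
    · rw [← hf.lt_iff_lt, Function.comp_apply, Function.comp_apply, hinv i hi, hinv j hj]
      exact hψ i j hi hj hij
    · obtain ⟨hlt, hv, hw⟩ := hprop i hi
      rw [← hinv i hi] at hlt hv hw
      have hk := (hlen _).1 hlt
      have hfk := hact _ hk (.inr hv)
      rw [hfk] at hv hw
      exact ⟨hk, hv, hw⟩
    · intro k hk hv
      obtain ⟨i, hi, hψi⟩ := hsurj (f k) ((hlen k).2 hk) (hact k hk (.inl hv) ▸ hv)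
      exact ⟨i, hi, by rw [Function.comp_apply, hψi, Function.leftInverse_invFun hf.injective]⟩

end WeakTrace

section Blocks

variable {ℓ : ℕ → ℕ}

variable (ℓ) in
def blockStart : ℕ → ℕ
  | 0 => 0
  | k + 1 => blockStart k + ℓ k

variable (ℓ) in
/-- `blockOf ℓ n = (k, i)` where `n = blockStart ℓ k + i` and `i < ℓ k` (`blockOf_spec`). -/
def blockOf : ℕ → ℕ × ℕ
  | 0 => (0, 0)
  | n + 1 =>
    if (blockOf n).2 + 1 < ℓ (blockOf n).1 then ((blockOf n).1, (blockOf n).2 + 1)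
    else ((blockOf n).1 + 1, 0)

theorem blockStart_strictMono (hℓ : ∀ k, 0 < ℓ k) : StrictMono (blockStart ℓ) :=
  strictMono_nat_of_lt_succ fun k => Nat.lt_add_of_pos_right (hℓ k)

theorem blockStart_add_lt (hℓ : ∀ k, 0 < ℓ k) {k k' i : ℕ} (hi : i < ℓ k) (hk : k < k') :
    blockStart ℓ k + i < blockStart ℓ k' :=
  calc blockStart ℓ k + i < blockStart ℓ (k + 1) := Nat.add_lt_add_left hi _
    _ ≤ blockStart ℓ k' := (blockStart_strictMono hℓ).monotone hk

theorem blockOf_spec (hℓ : ∀ k, 0 < ℓ k) (n : ℕ) :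
    blockStart ℓ (blockOf ℓ n).1 + (blockOf ℓ n).2 = n ∧ (blockOf ℓ n).2 < ℓ (blockOf ℓ n).1 := by
  induction n with
  | zero => exact ⟨rfl, hℓ 0⟩
  | succ n ih =>
    rw [blockOf]
    split_ifs with h
    · exact ⟨by dsimp only; omega, h⟩
    · exact ⟨by dsimp only; rw [blockStart]; omega, hℓ _⟩

theorem blockOf_blockStart_add (hℓ : ∀ k, 0 < ℓ k) {k i : ℕ} (hi : i < ℓ k) :
    blockOf ℓ (blockStart ℓ k + i) = (k, i) := by
  obtain ⟨hsum, hlt⟩ := blockOf_spec hℓ (blockStart ℓ k + i)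
  set k' := (blockOf ℓ (blockStart ℓ k + i)).1
  rcases lt_trichotomy k k' with h | h | h
  · have := blockStart_add_lt hℓ hi h; omega
  · exact Prod.ext h.symm (by rw [← h] at hsum; omega)
  · have := blockStart_add_lt hℓ hlt h; omega

theorem lt_blockStart_iff (hℓ : ∀ k, 0 < ℓ k) {n N : ℕ} :
    n < blockStart ℓ N ↔ (blockOf ℓ n).1 < N := by
  obtain ⟨hsum, hlt⟩ := blockOf_spec hℓ n
  constructor
  · intro hn
    by_contra! h
    have := (blockStart_strictMono hℓ).monotone h
    omega
  · intro h
    exact hsum ▸ blockStart_add_lt hℓ hlt h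

theorem natCast_lt_map_blockStart_iff (hℓ : ∀ k, 0 < ℓ k) {n : ℕ} {L : ℕ∞} :
    (n : ℕ∞) < L.map (blockStart ℓ) ↔ ((blockOf ℓ n).1 : ℕ∞) < L := by
  induction L using ENat.recTopCoe with
  | top =>
    exact iff_of_true (ENat.map_top (blockStart ℓ) ▸ ENat.natCast_lt_top n) (ENat.natCast_lt_top _)
  | coe N => exact (Nat.cast_lt (α := ℕ∞)).trans ((lt_blockStart_iff hℓ).trans Nat.cast_lt.symm)

theorem blockOf_lt_or_eq_of_natCast_le (hℓ : ∀ k, 0 < ℓ k) {n : ℕ} {L : ℕ∞}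
    (hn : (n : ℕ∞) ≤ L.map (blockStart ℓ)) :
    ((blockOf ℓ n).1 : ℕ∞) < L ∨ ((blockOf ℓ n).1 : ℕ∞) = L ∧ (blockOf ℓ n).2 = 0 := by
  rcases hn.lt_or_eq with h | h
  · exact .inl ((natCast_lt_map_blockStart_iff hℓ).1 h)
  · induction L using ENat.recTopCoe with
    | top => exact absurd h (ENat.map_top (blockStart ℓ) ▸ (ENat.natCast_ne_top n))
    | coe N =>
      have hN : blockOf ℓ n = (N, 0) := by
        rw [show n = blockStart ℓ N + 0 from Nat.cast_injective h]
        exact blockOf_blockStart_add hℓ (hℓ N)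
      simp [hN]

end Blocks

section Composition

variable {T R : Type} {D : R → Type}

def parComp (Θ : ThreadSys T R D)
    (Reg : ∀ r, RegState T (D r) → RWAct T R D → RegState T (D r) → Prop) :
    MState Θ → RWAct T R D → MState Θ → Prop := fun s a s' =>
  (∀ t, (RWAct.thr a = t ∧ RWAct.isThreadAct a → Θ.tr t (s.th t) a (s'.th t)) ∧
        (¬ (RWAct.thr a = t ∧ RWAct.isThreadAct a) → s'.th t = s.th t)) ∧
  (∀ r, (RWAct.regOf a = some r → Reg r (s.rg r) a (s'.rg r)) ∧
        (RWAct.regOf a ≠ some r → s'.rg r = s.rg r))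

variable [DecidableEq T] {Θ : ThreadSys T R D}
  {Reg : ∀ r, RegState T (D r) → RWAct T R D → RegState T (D r) → Prop}

theorem mTrans_eq_parComp (mode : OverlapMode) (Θ : ThreadSys T R D) :
    MTrans mode Θ = parComp Θ (AtoTrans mode) := rfl

theorem mTransIR_eq_parComp (Θ : ThreadSys T R D) : MTransIR Θ = parComp Θ IRAtoTrans := rfl

theorem parComp_update {σ : MState Θ} {a : RWAct T R D} {x : Θ.TS a.thr}
    {ρ : ∀ r, RegState T (D r)}
    (hx : a.isThreadAct → Θ.tr a.thr (σ.th a.thr) a x) (hx' : ¬ a.isThreadAct → x = σ.th a.thr)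
    (hρ : ∀ r, a.regOf = some r → Reg r (σ.rg r) a (ρ r))
    (hρ' : ∀ r, a.regOf ≠ some r → ρ r = σ.rg r) :
    parComp Θ Reg σ a ⟨Function.update σ.th a.thr x, ρ⟩ := by
  refine ⟨fun t => ⟨?_, fun h => ?_⟩, fun r => ⟨hρ r, hρ' r⟩⟩
  · rintro ⟨rfl, hta⟩
    simpa using hx hta
  · obtain rfl | ht := eq_or_ne t a.thr
    · simpa using hx' fun hta => h ⟨rfl, hta⟩
    · exact Function.update_of_ne ht _ _

theorem parComp_update_update [DecidableEq R] {σ : MState Θ} {a : RWAct T R D} {r : R}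
    (hr : a.regOf = some r) {x : Θ.TS a.thr} {u : RegState T (D r)}
    (hx : a.isThreadAct → Θ.tr a.thr (σ.th a.thr) a x) (hx' : ¬ a.isThreadAct → x = σ.th a.thr)
    (hu : Reg r (σ.rg r) a u) :
    parComp Θ Reg σ a ⟨Function.update σ.th a.thr x, Function.update σ.rg r u⟩ :=
  parComp_update hx hx' (fun r' h => by cases hr.symm.trans h; simpa using hu)
    fun _ h => Function.update_of_ne (by rintro rfl; exact h hr) _ _

theorem enabledIn_parComp_iff {σ : MState Θ} {a : RWAct T R D} :
    EnabledIn (parComp Θ Reg) a σ ↔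
      (a.isThreadAct → ∃ x, Θ.tr a.thr (σ.th a.thr) a x) ∧
        ∀ r, a.regOf = some r → ∃ u, Reg r (σ.rg r) a u := by
  classical
  constructor
  · rintro ⟨σ', hth, hrg⟩
    exact ⟨fun hta => ⟨_, (hth a.thr).1 ⟨rfl, hta⟩⟩, fun r hr => ⟨_, (hrg r).1 hr⟩⟩
  · rintro ⟨hth, hrg⟩
    exact ⟨_, parComp_update (x := if h : a.isThreadAct then (hth h).choose else σ.th a.thr)
      (ρ := fun r => if h : a.regOf = some r then (hrg r h).choose else σ.rg r)
      (fun h => by simpa [h] using (hth h).choose_spec) (fun h => by simp [h])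
      (fun r h => by simpa [h] using (hrg r h).choose_spec) (fun r h => by simp [h])⟩

end Composition

structure RegState.AgreeAt {T V : Type} (t : T) (s s' : RegState T V) : Prop where
  rds : t ∈ s.rds ↔ t ∈ s'.rds
  wrts : t ∈ s.wrts ↔ t ∈ s'.wrts
  pend : t ∈ s.pend ↔ t ∈ s'.pend
  recv : s.recv t = s'.recv t

structure MState.AgreeAt {T R : Type} {D : R → Type} {Θ : ThreadSys T R D} (t : T)
    (σ σ' : MState Θ) : Prop where
  th : σ.th t = σ'.th t
  rg : ∀ r, (σ.rg r).AgreeAt t (σ'.rg r)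

theorem RegState.AgreeAt.refl {T V : Type} (t : T) (s : RegState T V) : s.AgreeAt t s :=
  ⟨.rfl, .rfl, .rfl, rfl⟩

theorem MState.AgreeAt.refl {T R : Type} {D : R → Type} {Θ : ThreadSys T R D} (t : T)
    (σ : MState Θ) : σ.AgreeAt t σ :=
  ⟨rfl, fun r => .refl t (σ.rg r)⟩

theorem MState.AgreeAt.trans {T R : Type} {D : R → Type} {Θ : ThreadSys T R D} {t : T}
    {σ₁ σ₂ σ₃ : MState Θ} (h₁ : σ₁.AgreeAt t σ₂) (h₂ : σ₂.AgreeAt t σ₃) : σ₁.AgreeAt t σ₃ :=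
  ⟨h₁.th.trans h₂.th, fun r => ⟨(h₁.rg r).rds.trans (h₂.rg r).rds,
    (h₁.rg r).wrts.trans (h₂.rg r).wrts, (h₁.rg r).pend.trans (h₂.rg r).pend,
    (h₁.rg r).recv.trans (h₂.rg r).recv⟩⟩

section FullRead

variable {T R : Type} {D : R → Type} [DecidableEq T]

theorem AtoTrans.agreeAt_of_ne {mode : OverlapMode} {r : R} {s u : RegState T (D r)}
    {a : RWAct T R D} (h : AtoTrans mode r s a u) {t : T} (ht : t ≠ a.thr) : s.AgreeAt t u := by
  cases h <;> constructor <;> simp_all [RWAct.thr]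

/-- The full-read guards only test the membership of the acting thread itself. -/
theorem AtoTrans.exists_of_agreeAt {r : R} {s s' : RegState T (D r)} {a : RWAct T R D}
    (hs : s.AgreeAt a.thr s') {u : RegState T (D r)} (h : AtoTrans OverlapMode.FR r s a u) :
    ∃ u', AtoTrans OverlapMode.FR r s' a u' := by
  cases h with
  | startRead t hg => exact ⟨_, .startRead s' t ⟨hs.rds.not.1 hg.1, hs.wrts.not.1 hg.2⟩⟩
  | orderRead t h₁ h₂ => exact ⟨_, .orderRead s' t (hs.rds.1 h₁) (hs.pend.1 h₂)⟩
  | finishRead t h₁ h₂ =>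
    rw [show s.recv t = s'.recv t from hs.recv]
    exact ⟨_, .finishRead s' t (hs.rds.1 h₁) (hs.pend.not.1 h₂)⟩
  | startWrite t d hg => exact ⟨_, .startWrite s' t d ⟨hs.rds.not.1 hg.1, hs.wrts.not.1 hg.2⟩⟩
  | orderWrite t h₁ h₂ => exact ⟨_, .orderWrite s' t (hs.wrts.1 h₁) (hs.pend.1 h₂)⟩
  | finishWrite t h₁ h₂ => exact ⟨_, .finishWrite s' t (hs.wrts.1 h₁) (hs.pend.not.1 h₂)⟩

variable {Θ : ThreadSys T R D}

theorem MTrans.agreeAt_of_ne {mode : OverlapMode} {σ σ' : MState Θ} {a : RWAct T R D}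
    (h : MTrans mode Θ σ a σ') {t : T} (ht : t ≠ a.thr) : σ.AgreeAt t σ' where
  th := ((h.1 t).2 fun h' => ht h'.1.symm).symm
  rg r := by
    by_cases hr : a.regOf = some r
    · exact ((h.2 r).1 hr).agreeAt_of_ne ht
    · rw [(h.2 r).2 hr]
      exact .refl t _

theorem EnabledIn.of_agreeAt {σ σ' : MState Θ} {a : RWAct T R D} (hσ : σ.AgreeAt a.thr σ')
    (h : EnabledIn (MTrans OverlapMode.FR Θ) a σ) : EnabledIn (MTrans OverlapMode.FR Θ) a σ' := by
  rw [mTrans_eq_parComp, enabledIn_parComp_iff] at h ⊢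
  exact ⟨fun hta => hσ.th ▸ h.1 hta,
    fun r hr => AtoTrans.exists_of_agreeAt (hσ.rg r) (h.2 r hr).choose_spec⟩

end FullRead

namespace RWAct

variable {T R : Type} {D : R → Type}

/-- `i2f a` is the sequence `a.i2fAct 0, …, a.i2fAct (a.i2fLen - 1)`. -/
def i2fLen : RWAct T R D → ℕ
  | read _ _ _ => 3
  | _ => 1

def i2fAct : RWAct T R D → ℕ → RWAct T R D
  | read t r _, 0 => startRead t r
  | read t r _, 1 => orderRead t r
  | read t r d, _ => finishRead t r d
  | a, _ => a

/-- The instant-read counterpart of an action when the registers hold the values `v`. -/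
def toInstant (v : ∀ r, D r) : RWAct T R D → RWAct T R D
  | startRead t r => read t r (v r)
  | a => a

theorem i2fLen_pos (a : RWAct T R D) : 0 < a.i2fLen := by
  cases a <;> simp [i2fLen]

theorem i2fAct_of_not_isReadAct {a : RWAct T R D} (ha : ¬ a.isReadAct) (i : ℕ) :
    a.i2fAct i = a := by
  cases a <;> first | rfl | exact absurd trivial ha

theorem i2fLen_of_not_isReadAct {a : RWAct T R D} (ha : ¬ a.isReadAct) : a.i2fLen = 1 := by
  cases a <;> first | rfl | exact absurd trivial ha

theorem exists_eq_read_of_isReadAct {a : RWAct T R D} (ha : a.isReadAct) :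
    ∃ t r d, a = read t r d := by
  cases a <;> first | exact ⟨_, _, _, rfl⟩ | exact ha.elim

theorem thr_i2fAct (a : RWAct T R D) (i : ℕ) : (a.i2fAct i).thr = a.thr := by
  cases a <;> try rfl
  rcases i with _ | _ | _ <;> rfl

theorem i2fAct_eq_self_of_isVis {a : RWAct T R D} {i : ℕ} (h : a.IsVis ∨ (a.i2fAct i).IsVis) :
    a.i2fAct i = a := by
  cases a <;> try rfl
  rcases i with _ | _ | _ <;> simp_all [i2fAct, IsVis]

theorem i2fLen_eq_one_of_isVis {a : RWAct T R D} (h : a.IsVis) : a.i2fLen = 1 := by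
  cases a <;> first | rfl | exact h.elim

theorem toInstant_notMem_blk {a : RWAct T R D} (v : ∀ r, D r) (ha : a ∉ Blk) :
    a.toInstant v ∉ Blk := by
  cases a <;> first | exact ha | rintro ⟨_, ⟨⟩⟩

/-- `a` and `b` cannot be told apart by the interference relations. -/
structure Indist (a b : RWAct T R D) : Prop where
  thr : a.thr = b.thr
  isReadStart : ∀ r, a.isReadStart r ↔ b.isReadStart r
  isWriteStart : ∀ r, a.isWriteStart r ↔ b.isWriteStart r

theorem Indist.symm {a b : RWAct T R D} (h : Indist a b) : Indist b a :=
  ⟨h.thr.symm, fun r => (h.isReadStart r).symm, fun r => (h.isWriteStart r).symm⟩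

theorem indist_i2fAct_zero (a : RWAct T R D) : Indist a (a.i2fAct 0) := by
  cases a <;> exact ⟨rfl, fun _ => .rfl, fun _ => .rfl⟩

theorem indist_toInstant (v : ∀ r, D r) (a : RWAct T R D) : Indist a (a.toInstant v) := by
  cases a <;> exact ⟨rfl, fun _ => .rfl, fun _ => .rfl⟩

end RWAct

section Interference

variable {T R : Type} {D : R → Type} {conc : RWAct T R D → RWAct T R D → Prop}

theorem conc_congr (hconc : conc = concT ∨ conc = concS ∨ conc = concI ∨ conc = concA)
    {a a' b b' : RWAct T R D} (ha : a.Indist a') (hb : b.Indist b') :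
    conc a b ↔ conc a' b' := by
  rcases hconc with rfl | rfl | rfl | rfl <;>
    simp only [concA, concI, concS, concT, RWAct.inStart, ha.thr, hb.thr, ha.isReadStart,
      ha.isWriteStart, hb.isReadStart, hb.isWriteStart]

theorem thr_ne_of_conc (hconc : conc = concT ∨ conc = concS ∨ conc = concI ∨ conc = concA)
    {a b : RWAct T R D} (h : conc a b) : a.thr ≠ b.thr := by
  rcases hconc with rfl | rfl | rfl | rfl
  exacts [h, h.1, h.1.1, h.1.1.1]

end Interference

/-- Only the writers' entries of `recv` need to agree: a finish-read of `t` returns the value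
that its own order-read stored in `recv t`. -/
structure RegSim {T V : Type} (s F : RegState T V) : Prop where
  stor : F.stor = s.stor
  rds : F.rds = ∅
  wrts : F.wrts = s.wrts
  pend : F.pend = s.pend
  pend_subset : s.pend ⊆ s.wrts
  recv : ∀ t ∈ s.wrts, F.recv t = s.recv t

section Simulation

variable {T R : Type} {D : R → Type}

structure Simulates {Θ : ThreadSys T R D} (F : MState Θ) (σ : MState Θ.toIR) : Prop where
  th : F.th = σ.th
  rg : ∀ r, RegSim (σ.rg r) (F.rg r)

theorem simulates_minit {Θ : ThreadSys T R D} (d0 : ∀ r, D r) :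
    Simulates (Minit Θ d0) (Minit Θ.toIR d0) :=
  ⟨rfl, fun _ => ⟨rfl, rfl, rfl, rfl, Set.empty_subset _, fun _ _ => rfl⟩⟩

variable [DecidableEq T]

theorem AtoTrans.finishRead_of_recv {mode : OverlapMode} {r : R} (s : RegState T (D r)) (t : T)
    {d : D r} (h₁ : t ∈ s.rds) (h₂ : t ∉ s.pend) (hd : s.recv t = d) :
    AtoTrans mode r s (RWAct.finishRead t r d) { s with rds := s.rds \ {t} } :=
  hd ▸ .finishRead s t h₁ h₂

namespace RegSim

variable {r : R} {s s' F : RegState T (D r)}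

theorem exists_atoTrans (hF : RegSim s F) {a : RWAct T R D} (h : IRAtoTrans r s a s')
    (ha : ¬ a.isReadAct) : ∃ F', AtoTrans OverlapMode.FR r F a F' ∧ RegSim s' F' := by
  cases h with
  | read => exact absurd trivial ha
  | startWrite t d ht =>
    refine ⟨_, .startWrite F t d ⟨by simp [hF.rds], hF.wrts ▸ ht⟩, ⟨hF.stor, hF.rds,
      by simp [hF.wrts], by simp [hF.pend], Set.insert_subset_insert hF.pend_subset, ?_⟩⟩
    rintro t' (rfl | ht')
    · simp
    · obtain rfl | hne := eq_or_ne t' t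
      · simp
      · simp [hne, hF.recv t' ht']
  | orderWrite t h₁ h₂ =>
    exact ⟨_, .orderWrite F t (hF.wrts ▸ h₁) (hF.pend ▸ h₂), ⟨hF.recv t h₁, hF.rds, hF.wrts,
      by simp [hF.pend], Set.sdiff_subset.trans hF.pend_subset, hF.recv⟩⟩
  | finishWrite t h₁ h₂ =>
    refine ⟨_, .finishWrite F t (hF.wrts ▸ h₁) (hF.pend ▸ h₂), ⟨hF.stor, hF.rds,
      by simp [hF.wrts], hF.pend, fun x hx => ⟨hF.pend_subset hx, ?_⟩, fun x hx => hF.recv x hx.1⟩⟩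
    rintro rfl
    exact h₂ hx

theorem exists_read_steps (hF : RegSim s F) {t : T} {d : D r}
    (h : IRAtoTrans r s (RWAct.read t r d) s') :
    ∃ F₁ F₂ F₃, AtoTrans OverlapMode.FR r F (RWAct.startRead t r) F₁ ∧
      AtoTrans OverlapMode.FR r F₁ (RWAct.orderRead t r) F₂ ∧
      AtoTrans OverlapMode.FR r F₂ (RWAct.finishRead t r d) F₃ ∧ RegSim s' F₃ := by
  obtain ⟨_, ht⟩ := h
  have htp : t ∉ F.pend := hF.pend ▸ fun h => ht (hF.pend_subset h)
  refine ⟨_, _, _, .startRead F t ⟨by simp [hF.rds], hF.wrts ▸ ht⟩,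
    .orderRead _ t (Set.mem_insert t _) (Set.mem_insert t _),
    AtoTrans.finishRead_of_recv _ t (Set.mem_insert t _) (by simp) (by simp [hF.stor]),
    ⟨hF.stor, by simp [hF.rds], hF.wrts, ?_, hF.pend_subset, fun t' ht' => ?_⟩⟩
  · simpa [Set.insert_sdiff_self_of_notMem htp] using hF.pend
  · have hne : t' ≠ t := fun h => ht (h ▸ ht')
    simp [hne, hF.recv t' ht']

end RegSim

namespace Simulates

variable {Θ : ThreadSys T R D} {F : MState Θ} {σ σ' : MState Θ.toIR}

theorem exists_step (hF : Simulates F σ) {a : RWAct T R D} (h : MTransIR Θ.toIR σ a σ')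
    (ha : ¬ a.isReadAct) : ∃ F', MTrans OverlapMode.FR Θ F a F' ∧ Simulates F' σ' := by
  have hreg : ∀ r, ∃ u, (a.regOf = some r → AtoTrans OverlapMode.FR r (F.rg r) a u) ∧
      (a.regOf ≠ some r → u = F.rg r) ∧ RegSim (σ'.rg r) u := by
    intro r
    by_cases hr : a.regOf = some r
    · obtain ⟨u, hu, hsim⟩ := (hF.rg r).exists_atoTrans ((h.2 r).1 hr) ha
      exact ⟨u, fun _ => hu, (absurd hr ·), hsim⟩
    · exact ⟨F.rg r, (absurd · hr), fun _ => rfl, (h.2 r).2 hr ▸ hF.rg r⟩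
  choose ρ hρ using hreg
  refine ⟨⟨σ'.th, ρ⟩, ⟨fun t => ⟨fun ht => ?_, fun ht => ?_⟩,
    fun r => ⟨(hρ r).1, (hρ r).2.1⟩⟩, ⟨rfl, fun r => (hρ r).2.2⟩⟩
  · rcases (h.1 t).1 ht with ⟨-, -, htr⟩ | ⟨_, _, _, rfl, -⟩
    · exact hF.th ▸ htr
    · exact absurd trivial ha
  · exact hF.th ▸ (h.1 t).2 ht

theorem exists_read_steps (hF : Simulates F σ) (hΘ : Θ.Good) {t : T} {r : R} {d : D r}
    (h : MTransIR Θ.toIR σ (RWAct.read t r d) σ') :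
    ∃ F₁ F₂ F₃, MTrans OverlapMode.FR Θ F (RWAct.startRead t r) F₁ ∧
      MTrans OverlapMode.FR Θ F₁ (RWAct.orderRead t r) F₂ ∧
      MTrans OverlapMode.FR Θ F₂ (RWAct.finishRead t r d) F₃ ∧ Simulates F₃ σ' := by
  classical
  obtain ⟨m, hm₁, hm₂⟩ : ∃ m, Θ.tr t (σ.th t) (RWAct.startRead t r) m ∧
      Θ.tr t m (RWAct.finishRead t r d) (σ'.th t) := by
    rcases (h.1 t).1 ⟨rfl, trivial⟩ with ⟨-, -, htr⟩ | ⟨_, _, m, he, hm₁, hm₂⟩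
    · exact absurd htr (hΘ.2.1 _ _ _ _ _ _)
    · cases he
      exact ⟨m, hm₁, hm₂⟩
  obtain ⟨u₁, u₂, u₃, hu₁, hu₂, hu₃, hsim⟩ := (hF.rg r).exists_read_steps ((h.2 r).1 rfl)
  have hth : ∀ t', t' ≠ t → F.th t' = σ'.th t' := fun t' ht' =>
    (congrFun hF.th t').trans ((h.1 t').2 fun h => ht' h.1.symm).symm
  refine ⟨_, _, _,
    parComp_update_update (x := m) rfl (fun _ => hF.th ▸ hm₁) (absurd trivial) hu₁,
    parComp_update_update (x := m) rfl nofun (fun _ => by simp [RWAct.thr]) (by simpa using hu₂),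
    parComp_update_update (x := σ'.th t) rfl (fun _ => by simpa [RWAct.thr] using hm₂)
      (absurd trivial) (by simpa using hu₃),
    ⟨?_, fun r' => ?_⟩⟩
  · simp only [RWAct.thr, Function.update_idem]
    exact Function.update_eq_iff.2 ⟨rfl, fun t' ht' => by simpa [ht'] using hth t' ht'⟩
  · obtain rfl | hr' := eq_or_ne r' r
    · simpa using hsim
    · simpa [hr', (h.2 r').2 (by simpa [RWAct.regOf] using hr'.symm)] using hF.rg r'

end Simulates

end Simulation

section Enabledness

variable {T R : Type} {D : R → Type} [DecidableEq T]

theorem RegSim.exists_irAtoTrans {r : R} {s F u : RegState T (D r)} (hF : RegSim s F)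
    {a : RWAct T R D} (h : AtoTrans OverlapMode.FR r F a u) {v : ∀ r, D r} (hv : v r = s.stor) :
    ∃ u', IRAtoTrans r s (a.toInstant v) u' := by
  cases h with
  | startRead t hg =>
    simp only [RWAct.toInstant, hv]
    exact ⟨_, .read s t (hF.wrts ▸ hg.2)⟩
  | orderRead t h₁ => exact absurd (hF.rds ▸ h₁) (Set.notMem_empty t)
  | finishRead t h₁ => exact absurd (hF.rds ▸ h₁) (Set.notMem_empty t)
  | startWrite t d hg => exact ⟨_, .startWrite s t d (hF.wrts ▸ hg.2)⟩
  | orderWrite t h₁ h₂ => exact ⟨_, .orderWrite s t (hF.wrts ▸ h₁) (hF.pend ▸ h₂)⟩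
  | finishWrite t h₁ h₂ => exact ⟨_, .finishWrite s t (hF.wrts ▸ h₁) (hF.pend ▸ h₂)⟩

/-- A start-read can be answered at once by a read, since after a start-read the thread
accepts every value. -/
theorem Simulates.enabledIn_toInstant {Θ : ThreadSys T R D} {F : MState Θ}
    {σ : MState Θ.toIR} (hF : Simulates F σ) (hΘ : Θ.Good) {a : RWAct T R D}
    (h : EnabledIn (MTrans OverlapMode.FR Θ) a F) :
    EnabledIn (MTransIR Θ.toIR) (a.toInstant fun r => (σ.rg r).stor) σ := by
  rw [mTrans_eq_parComp, enabledIn_parComp_iff, hF.th] at h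
  rw [mTransIR_eq_parComp, enabledIn_parComp_iff]
  obtain ⟨hth, hrg⟩ := h
  have hreg : ∀ r, a.regOf = some r →
      ∃ u, IRAtoTrans r (σ.rg r) (a.toInstant fun r => (σ.rg r).stor) u := fun r hr =>
    (hF.rg r).exists_irAtoTrans (hrg r hr).choose_spec rfl
  refine ⟨fun hta => ?_, by cases a <;> exact hreg⟩
  cases a with
  | startRead t r =>
    obtain ⟨m, hm⟩ := hth trivial
    obtain ⟨x, hx⟩ := (hΘ.2.2.1 t r _ m hm).1 (σ.rg r).stor
    exact ⟨x, .inr ⟨r, _, m, rfl, hm, hx⟩⟩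
  | finishRead t r d => exact absurd (hreg r rfl).choose_spec nofun
  | read t r d => exact absurd (hth trivial).choose_spec (hΘ.2.1 _ _ _ _ _ _)
  | orderRead | orderWrite => exact hta.elim
  | _ => exact (hth hta).imp fun x hx => .inl ⟨nofun, nofun, hx⟩

end Enabledness

def RawPath.i2fLens {S : Type*} {T R : Type} {D : R → Type} (π : RawPath S (RWAct T R D)) : ℕ → ℕ :=
  fun k => (π.acts k).i2fLen

theorem RawPath.i2fLens_pos {S : Type*} {T R : Type} {D : R → Type} (π : RawPath S (RWAct T R D))
    (k : ℕ) : 0 < π.i2fLens k :=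
  (π.acts k).i2fLen_pos

section Construction

variable {T R : Type} {D : R → Type} [DecidableEq T] {Θ : ThreadSys T R D}

variable (Θ) in
def IsI2FSegment (G : ℕ → MState Θ) (a : RWAct T R D) : Prop :=
  ∀ i < a.i2fLen, MTrans OverlapMode.FR Θ (G i) (a.i2fAct i) (G (i + 1))

/-- Only thread `a.thr` acts during `i2f a`, so every other thread sees no change. -/
theorem IsI2FSegment.agreeAt {G : ℕ → MState Θ} {a : RWAct T R D} (hG : IsI2FSegment Θ G a)
    {t : T} (ht : t ≠ a.thr) {i j : ℕ} (hij : i ≤ j) (hj : j ≤ a.i2fLen) :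
    (G i).AgreeAt t (G j) := by
  induction j, hij using Nat.le_induction with
  | base => exact .refl t _
  | succ j _ ih =>
    exact (ih (by omega)).trans
      ((hG j (by omega)).agreeAt_of_ne (by rwa [RWAct.thr_i2fAct]))

theorem Simulates.exists_i2fSegment {F : MState Θ} {σ σ' : MState Θ.toIR} (hF : Simulates F σ)
    (hΘ : Θ.Good) {a : RWAct T R D} (h : MTransIR Θ.toIR σ a σ') :
    ∃ G : ℕ → MState Θ, G 0 = F ∧ IsI2FSegment Θ G a ∧ Simulates (G a.i2fLen) σ' := by
  by_cases ha : a.isReadAct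
  · cases a with
    | read t r d =>
      obtain ⟨F₁, F₂, F₃, h₁, h₂, h₃, hsim⟩ := hF.exists_read_steps hΘ h
      refine ⟨fun | 0 => F | 1 => F₁ | 2 => F₂ | _ => F₃, rfl, fun i hi => ?_, hsim⟩
      change i < 3 at hi
      interval_cases i
      exacts [h₁, h₂, h₃]
    | _ => exact ha.elim
  · obtain ⟨F', hF', hsim⟩ := hF.exists_step h ha
    have hlen := RWAct.i2fLen_of_not_isReadAct ha
    refine ⟨fun i => if i = 0 then F else F', rfl, fun i hi => ?_, by simpa [hlen] using hsim⟩
    obtain rfl : i = 0 := by omega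
    simpa [RWAct.i2fAct_of_not_isReadAct ha] using hF'

variable (Θ) (d0 : ∀ r, D r) (π : RawPath (MState Θ.toIR) (RWAct T R D))

open Classical in
/-- A segment replaying the `k`-th step of `π` from `F`; constantly `F` if there is none. -/
noncomputable def liftStep (k : ℕ) (F : MState Θ) : ℕ → MState Θ :=
  if h : ∃ G : ℕ → MState Θ, G 0 = F ∧ IsI2FSegment Θ G (π.acts k) ∧
      Simulates (G (π.acts k).i2fLen) (π.states (k + 1)) then h.choose
  else fun _ => F

noncomputable def frStart : ℕ → MState Θ
  | 0 => Minit Θ d0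
  | k + 1 => liftStep Θ π k (frStart k) (π.acts k).i2fLen

noncomputable def frState (k : ℕ) : ℕ → MState Θ := liftStep Θ π k (frStart Θ d0 π k)

/-- The path `i2f π` of `M_FR`: the `k`-th step of `π` becomes the block `frState k`. -/
noncomputable def i2fPath : RawPath (MState Θ) (RWAct T R D) where
  states n := frState Θ d0 π (blockOf π.i2fLens n).1 (blockOf π.i2fLens n).2
  acts n := (π.acts (blockOf π.i2fLens n).1).i2fAct (blockOf π.i2fLens n).2
  len := π.len.map (blockStart π.i2fLens)

variable {Θ d0 π}

theorem liftStep_zero (k : ℕ) (F : MState Θ) : liftStep Θ π k F 0 = F := by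
  unfold liftStep
  split_ifs with h
  exacts [h.choose_spec.1, rfl]

theorem frState_zero (k : ℕ) : frState Θ d0 π k 0 = frStart Θ d0 π k := liftStep_zero k _

theorem Simulates.frState_spec (hπ : IsPathOf (MTransIR Θ.toIR) (Minit Θ.toIR d0) π)
    (hΘ : Θ.Good) {k : ℕ} (hk : (k : ℕ∞) < π.len)
    (hF : Simulates (frStart Θ d0 π k) (π.states k)) :
    IsI2FSegment Θ (frState Θ d0 π k) (π.acts k) ∧
      Simulates (frStart Θ d0 π (k + 1)) (π.states (k + 1)) := by
  have h := hF.exists_i2fSegment hΘ (hπ.2 k hk)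
  have hlift : liftStep Θ π k (frStart Θ d0 π k) = h.choose := dif_pos h
  simp only [frState, frStart, hlift]
  exact h.choose_spec.2

theorem simulates_frStart (hπ : IsPathOf (MTransIR Θ.toIR) (Minit Θ.toIR d0) π) (hΘ : Θ.Good) :
    ∀ k : ℕ, (k : ℕ∞) ≤ π.len → Simulates (frStart Θ d0 π k) (π.states k)
  | 0, _ => hπ.1 ▸ simulates_minit d0
  | k + 1, hk =>
    have hk' : (k : ℕ∞) < π.len := lt_of_lt_of_le (by exact_mod_cast k.lt_succ_self) hk
    ((simulates_frStart hπ hΘ k hk'.le).frState_spec hπ hΘ hk').2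

theorem isI2FSegment_frState (hπ : IsPathOf (MTransIR Θ.toIR) (Minit Θ.toIR d0) π)
    (hΘ : Θ.Good) {k : ℕ} (hk : (k : ℕ∞) < π.len) :
    IsI2FSegment Θ (frState Θ d0 π k) (π.acts k) :=
  ((simulates_frStart hπ hΘ k hk.le).frState_spec hπ hΘ hk).1

theorem i2fPath_states {k i : ℕ} (hi : i < π.i2fLens k) :
    (i2fPath Θ d0 π).states (blockStart π.i2fLens k + i) = frState Θ d0 π k i := by
  simp only [i2fPath, blockOf_blockStart_add π.i2fLens_pos hi]

theorem i2fPath_acts {k i : ℕ} (hi : i < π.i2fLens k) :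
    (i2fPath Θ d0 π).acts (blockStart π.i2fLens k + i) = (π.acts k).i2fAct i := by
  simp only [i2fPath, blockOf_blockStart_add π.i2fLens_pos hi]

theorem i2fPath_states_succ (n : ℕ) :
    (i2fPath Θ d0 π).states (n + 1) =
      frState Θ d0 π (blockOf π.i2fLens n).1 ((blockOf π.i2fLens n).2 + 1) := by
  obtain ⟨hn, hi⟩ := blockOf_spec π.i2fLens_pos n
  set k := (blockOf π.i2fLens n).1
  set i := (blockOf π.i2fLens n).2
  rcases (show i + 1 ≤ π.i2fLens k from hi).lt_or_eq with hi' | hi'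
  · rw [← i2fPath_states hi', ← hn, add_assoc]
  · rw [show n + 1 = blockStart π.i2fLens (k + 1) + 0 by rw [blockStart]; omega,
      i2fPath_states (π.i2fLens_pos _), frState_zero, hi']
    rfl

theorem natCast_lt_len_i2fPath_iff {n : ℕ} :
    (n : ℕ∞) < (i2fPath Θ d0 π).len ↔ ((blockOf π.i2fLens n).1 : ℕ∞) < π.len :=
  natCast_lt_map_blockStart_iff π.i2fLens_pos

theorem blockStart_lt_len_i2fPath_iff {k : ℕ} :
    (blockStart π.i2fLens k : ℕ∞) < (i2fPath Θ d0 π).len ↔ (k : ℕ∞) < π.len := by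
  rw [natCast_lt_len_i2fPath_iff, ← add_zero (blockStart _ k),
    blockOf_blockStart_add π.i2fLens_pos (π.i2fLens_pos k)]

theorem isPathOf_i2fPath (hπ : IsPathOf (MTransIR Θ.toIR) (Minit Θ.toIR d0) π)
    (hΘ : Θ.Good) : IsPathOf (MTrans OverlapMode.FR Θ) (Minit Θ d0) (i2fPath Θ d0 π) := by
  refine ⟨frState_zero 0, fun n hn => ?_⟩
  rw [i2fPath_states_succ]
  exact isI2FSegment_frState hπ hΘ (natCast_lt_len_i2fPath_iff.1 hn) _
    (blockOf_spec π.i2fLens_pos n).2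

theorem isI2F_i2fPath : IsI2F π (i2fPath Θ d0 π) := by
  refine ⟨blockStart π.i2fLens, rfl, fun k _ => ?_, fun h => by simp only [i2fPath, h]; rfl,
    fun n h => by simp only [i2fPath, h]; rfl⟩
  have hact (i : ℕ) (hi : i < π.i2fLens k) := i2fPath_acts (Θ := Θ) (d0 := d0) hi
  by_cases hr : (π.acts k).isReadAct
  · obtain ⟨t, r, d, hk⟩ := RWAct.exists_eq_read_of_isReadAct hr
    have hℓ : π.i2fLens k = 3 := by rw [RawPath.i2fLens, hk]; rfl
    refine .inr ⟨t, r, d, hk, ?_, ?_, ?_, by rw [blockStart, hℓ]⟩ <;>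
      simp only [hk] at hact
    exacts [hact 0 (by omega), hact 1 (by omega), hact 2 (by omega)]
  · have hℓ : π.i2fLens k = 1 := RWAct.i2fLen_of_not_isReadAct hr
    refine .inl ⟨hr, ?_, by rw [blockStart, hℓ]⟩
    simpa [RWAct.i2fAct_of_not_isReadAct hr] using hact 0 (by omega)

theorem isEllMinus_i2fPath_iff (w : ℕ → Option (RWAct T R D)) :
    IsEllMinus RWAct.IsVis π w ↔ IsEllMinus RWAct.IsVis (i2fPath Θ d0 π) w := by
  have hact (k : ℕ) : (i2fPath Θ d0 π).acts (blockStart π.i2fLens k) = (π.acts k).i2fAct 0 :=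
    i2fPath_acts (π.i2fLens_pos k)
  refine isEllMinus_iff_of_strictMono (blockStart_strictMono π.i2fLens_pos)
    (fun k => blockStart_lt_len_i2fPath_iff) (fun k _ h => ?_) (fun n _ h => ?_) w
  · rw [hact] at h ⊢
    exact RWAct.i2fAct_eq_self_of_isVis h
  · obtain ⟨hn, hi⟩ := blockOf_spec π.i2fLens_pos n
    change ((π.acts _).i2fAct _).IsVis at h
    have hvis := RWAct.i2fAct_eq_self_of_isVis (.inr h) ▸ h
    have hℓ : π.i2fLens _ = 1 := RWAct.i2fLen_eq_one_of_isVis hvis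
    exact ⟨(blockOf π.i2fLens n).1, by omega⟩

variable {conc : RWAct T R D → RWAct T R D → Prop}

theorem exists_not_conc_of_enabledIn_frStart
    (hconc : conc = concT ∨ conc = concS ∨ conc = concI ∨ conc = concA)
    (hπ : IsPathOf (MTransIR Θ.toIR) (Minit Θ.toIR d0) π) (hΘ : Θ.Good)
    (hjust : JustPath (MTransIR Θ.toIR) conc Blk π) {k : ℕ} (hk : (k : ℕ∞) ≤ π.len)
    {a : RWAct T R D} (hB : a ∉ Blk)
    (ha : EnabledIn (MTrans OverlapMode.FR Θ) a (frStart Θ d0 π k)) :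
    ∃ j, blockStart π.i2fLens k ≤ j ∧ (j : ℕ∞) < (i2fPath Θ d0 π).len ∧
      ¬ conc a ((i2fPath Θ d0 π).acts j) := by
  obtain ⟨j, hkj, hj, hnc⟩ := hjust k _ hk (RWAct.toInstant_notMem_blk _ hB)
    ((simulates_frStart hπ hΘ k hk).enabledIn_toInstant hΘ ha)
  refine ⟨blockStart π.i2fLens j, (blockStart_strictMono π.i2fLens_pos).monotone hkj,
    blockStart_lt_len_i2fPath_iff.2 hj, fun hc => hnc ?_⟩
  rw [← add_zero (blockStart _ j), i2fPath_acts (π.i2fLens_pos j)] at hc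
  exact (conc_congr hconc (RWAct.indist_toInstant _ a) (RWAct.indist_i2fAct_zero _).symm).1 hc

theorem justPath_i2fPath (hconc : conc = concT ∨ conc = concS ∨ conc = concI ∨ conc = concA)
    (hπ : IsPathOf (MTransIR Θ.toIR) (Minit Θ.toIR d0) π) (hΘ : Θ.Good)
    (hjust : JustPath (MTransIR Θ.toIR) conc Blk π) :
    JustPath (MTrans OverlapMode.FR Θ) conc Blk (i2fPath Θ d0 π) := by
  intro n a hn hB ha
  obtain ⟨hsum, hi⟩ := blockOf_spec π.i2fLens_pos n
  set k := (blockOf π.i2fLens n).1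
  set i := (blockOf π.i2fLens n).2
  have hpos := blockOf_lt_or_eq_of_natCast_le π.i2fLens_pos hn
  by_cases hi0 : i = 0
  · have hk : (k : ℕ∞) ≤ π.len := hpos.elim le_of_lt fun h => h.1.le
    change EnabledIn _ a (frState Θ d0 π k i) at ha
    rw [hi0, frState_zero] at ha
    obtain ⟨j, hj, hjlen, hnc⟩ := exists_not_conc_of_enabledIn_frStart hconc hπ hΘ hjust hk hB ha
    exact ⟨j, by omega, hjlen, hnc⟩
  have hk : (k : ℕ∞) < π.len := hpos.resolve_right fun h => hi0 h.2
  by_cases hthr : a.thr = (π.acts k).thr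
  · refine ⟨n, le_rfl, natCast_lt_len_i2fPath_iff.2 hk, fun hc => thr_ne_of_conc hconc hc ?_⟩
    exact hthr.trans (RWAct.thr_i2fAct _ _).symm
  · have hagree := (isI2FSegment_frState hπ hΘ hk).agreeAt hthr hi.le le_rfl
    have hk' : ((k + 1 : ℕ) : ℕ∞) ≤ π.len := by exact_mod_cast Order.add_one_le_of_lt hk
    obtain ⟨j, hj, hjlen, hnc⟩ := exists_not_conc_of_enabledIn_frStart hconc hπ hΘ hjust hk' hB
      (ha.of_agreeAt hagree)
    have hstart : blockStart π.i2fLens (k + 1) = blockStart π.i2fLens k + π.i2fLens k := rfl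
    exact ⟨j, by omega, hjlen, hnc⟩

end Construction

/-- Every `B`-`⌣_C`-just path of the instant-read model `M_IR` is transformed by `i2f`
(replacing each read with start-read · order-read · finish-read) into a `B`-`⌣_C`-just
path of the full-read model `M_FR` with the same weak traces; consequently
`WCT_C(M_IR) ⊆ WCT_C(M_FR)`. -/
theorem instant_read_just_to_full_read_just
    {T R : Type} {D : R → Type} [DecidableEq T]
    (Θ : ThreadSys T R D) (hΘ : Θ.Good) (d0 : ∀ r, D r)
    (conc : RWAct T R D → RWAct T R D → Prop)
    (hconc : conc = concT ∨ conc = concS ∨ conc = concI ∨ conc = concA) :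
    (∀ π : RawPath (MState Θ.toIR) (RWAct T R D),
        IsPathOf (MTransIR Θ.toIR) (Minit Θ.toIR d0) π →
        JustPath (MTransIR Θ.toIR) conc Blk π →
        ∃ π' : RawPath (MState Θ) (RWAct T R D),
          IsPathOf (MTrans OverlapMode.FR Θ) (Minit Θ d0) π' ∧
          IsI2F π π' ∧
          JustPath (MTrans OverlapMode.FR Θ) conc Blk π' ∧
          (∀ w : ℕ → Option (RWAct T R D),
            IsEllMinus RWAct.IsVis π w ↔ IsEllMinus RWAct.IsVis π' w)) ∧
      WCT (MTransIR Θ.toIR) (Minit Θ.toIR d0)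
          (JustPath (MTransIR Θ.toIR) conc Blk) RWAct.IsVis ⊆
        WCT (MTrans OverlapMode.FR Θ) (Minit Θ d0)
          (JustPath (MTrans OverlapMode.FR Θ) conc Blk) RWAct.IsVis := by
  refine ⟨fun π hπ hjust => ⟨i2fPath Θ d0 π, isPathOf_i2fPath hπ hΘ, isI2F_i2fPath,
    justPath_i2fPath hconc hπ hΘ hjust, isEllMinus_i2fPath_iff⟩, ?_⟩
  rintro w ⟨π, hπ, hjust, hw⟩
  exact ⟨i2fPath Θ d0 π, isPathOf_i2fPath hπ hΘ, justPath_i2fPath hconc hπ hΘ hjust,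
    (isEllMinus_i2fPath_iff w).1 hw⟩
end
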